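/- arXiv:math/0608542 — 5 statements merged into one kernel-verified Lean document; each statement's English description precedes it below -/
import Mathlib

section
/- Let I be a radical ideal in a polynomial ring over an algebraically closed field. Then the r-th symbolic power of I equals the join of I with the r-th power of the irrelevant maximal ideal: I^{(r)} = I * m^r. -/
open MvPolynomial

/-! ### Auxiliary generic lemmas about monomial ideals -/

section Generic

variable {A : Type*} [CommRing A] {σ : Type*}

theorem aux_deg_add (s t : σ →₀ ℕ) :
    (s + t).sum (fun _ e => e) = s.sum (fun _ e => e) + t.sum (fun _ e => e) :=
  Finsupp.sum_add_index' (fun _ => rfl) (fun _ _ _ => rfl)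

theorem aux_deg_single (i : σ) (k : ℕ) : (Finsupp.single i k).sum (fun _ e => e) = k :=
  Finsupp.sum_single_index rfl

theorem aux_span_X_pow_eq (r : ℕ) :
    (Ideal.span (Set.range (X : σ → MvPolynomial σ A))) ^ r
      = Ideal.span ((fun s => monomial s (1 : A)) '' {s : σ →₀ ℕ | r ≤ s.sum fun _ e => e}) := by
  induction r with
  | zero =>
    rw [pow_zero, Ideal.one_eq_top, eq_comm, Ideal.eq_top_iff_one]
    have : (1 : MvPolynomial σ A) = monomial 0 1 := by simp
    rw [this]
    exact Ideal.subset_span ⟨0, by simp, rfl⟩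
  | succ r ih =>
    rw [pow_succ, ih, Ideal.span_mul_span']
    apply le_antisymm
    · rw [Ideal.span_le]
      rintro _ ⟨_, ⟨s, hs, rfl⟩, _, ⟨i, rfl⟩, rfl⟩
      simp only [Set.mem_setOf_eq] at hs
      apply Ideal.subset_span
      refine ⟨s + Finsupp.single i 1, ?_, ?_⟩
      · simp only [Set.mem_setOf_eq, aux_deg_add, aux_deg_single]
        omega
      · simp [X, monomial_mul]
    · rw [Ideal.span_le]
      rintro _ ⟨t, ht, rfl⟩
      simp only [Set.mem_setOf_eq] at ht
      have htne : t ≠ 0 := by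
        intro h; rw [h] at ht; simp [Finsupp.sum_zero_index] at ht
      obtain ⟨i, hi⟩ : ∃ i, t i ≠ 0 := by
        by_contra h
        push_neg at h
        exact htne (Finsupp.ext fun a => h a)
      have key : t - Finsupp.single i 1 + Finsupp.single i 1 = t := by
        ext a
        simp only [Finsupp.coe_add, Finsupp.coe_tsub, Pi.add_apply, Pi.sub_apply]
        by_cases h : i = a
        · subst h; rw [Finsupp.single_eq_same]; omega
        · rw [Finsupp.single_eq_of_ne' h]; omega
      have hdeg : r ≤ (t - Finsupp.single i 1).sum fun _ e => e := by
        have h2 := aux_deg_add (t - Finsupp.single i 1) (Finsupp.single i 1)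
        rw [key, aux_deg_single] at h2
        omega
      have heq : ((fun s => monomial s (1 : A)) t)
          = monomial (t - Finsupp.single i 1) 1 * X i := by
        simp only [X, monomial_mul, mul_one, key]
      rw [heq]
      exact Ideal.subset_span
        (Set.mul_mem_mul ⟨t - Finsupp.single i 1, hdeg, rfl⟩ ⟨i, rfl⟩)

theorem aux_deg_mono {s t : σ →₀ ℕ} (h : s ≤ t) :
    s.sum (fun _ e => e) ≤ t.sum fun _ e => e := by
  have key : s + (t - s) = t := by
    ext a
    have := Finsupp.le_def.mp h a
    simp only [Finsupp.coe_add, Finsupp.coe_tsub, Pi.add_apply, Pi.sub_apply]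
    omega
  calc s.sum (fun _ e => e) ≤ s.sum (fun _ e => e) + (t - s).sum (fun _ e => e) := le_self_add
  _ = t.sum fun _ e => e := by rw [← aux_deg_add, key]

theorem aux_mem_span_X_pow {r : ℕ} {F : MvPolynomial σ A} :
    F ∈ (Ideal.span (Set.range (X : σ → MvPolynomial σ A))) ^ r
      ↔ ∀ β : σ →₀ ℕ, (β.sum fun _ e => e) < r → coeff β F = 0 := by
  rw [aux_span_X_pow_eq, mem_ideal_span_monomial_image]
  constructor
  · intro h β hβ
    by_contra hc
    obtain ⟨s, hs, hsle⟩ := h β (mem_support_iff.mpr hc)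
    simp only [Set.mem_setOf_eq] at hs
    have := aux_deg_mono hsle
    omega
  · intro h β hβ
    refine ⟨β, ?_, le_refl _⟩
    simp only [Set.mem_setOf_eq]
    by_contra hc
    push_neg at hc
    exact (mem_support_iff.mp hβ) (h β hc)

theorem aux_monomial_mem_span_X_pow {r : ℕ} {β : σ →₀ ℕ}
    (h : r ≤ β.sum fun _ e => e) (c : A) :
    monomial β c ∈ (Ideal.span (Set.range (X : σ → MvPolynomial σ A))) ^ r := by
  rw [aux_span_X_pow_eq]
  have heq : (monomial β c : MvPolynomial σ A) = C c * monomial β 1 := by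
    rw [C_mul_monomial, mul_one]
  rw [heq]
  exact Ideal.mul_mem_left _ _ (Ideal.subset_span ⟨β, h, rfl⟩)

variable [DecidableEq σ]

/-- The ideal of polynomials all of whose coefficients in degree `< r` lie in `I`. -/
def coeffIdeal (σ : Type*) [DecidableEq σ] (I : Ideal A) (r : ℕ) : Ideal (MvPolynomial σ A) where
  carrier := {F | ∀ β : σ →₀ ℕ, (β.sum fun _ e => e) < r → coeff β F ∈ I}
  zero_mem' := fun β _ => by simp [I.zero_mem]
  add_mem' := fun {F G} hF hG β hβ => by
    rw [coeff_add]; exact I.add_mem (hF β hβ) (hG β hβ)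
  smul_mem' := fun c F hF β hβ => by
    rw [smul_eq_mul, coeff_mul]
    apply Ideal.sum_mem
    intro x hmem
    rw [Finset.HasAntidiagonal.mem_antidiagonal] at hmem
    apply I.mul_mem_left
    apply hF
    have : (x.1.sum fun _ e => e) + (x.2.sum fun _ e => e) = β.sum fun _ e => e := by
      rw [← aux_deg_add, hmem]
    omega

theorem mem_coeffIdeal {I : Ideal A} {r : ℕ} {F : MvPolynomial σ A} :
    F ∈ coeffIdeal σ I r ↔ ∀ β : σ →₀ ℕ, (β.sum fun _ e => e) < r → coeff β F ∈ I :=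
  Iff.rfl

theorem sup_eq_coeffIdeal (I : Ideal A) (r : ℕ) :
    I.map (C : A →+* MvPolynomial σ A) ⊔ (Ideal.span (Set.range X)) ^ r
      = coeffIdeal σ I r := by
  apply le_antisymm
  · apply sup_le
    · rw [Ideal.map_le_iff_le_comap]
      intro f hf
      rw [Ideal.mem_comap, mem_coeffIdeal]
      intro β hβ
      rw [coeff_C]
      split_ifs
      · exact hf
      · exact I.zero_mem
    · intro F hF
      rw [mem_coeffIdeal]
      intro β hβ
      rw [aux_mem_span_X_pow.mp hF β hβ]
      exact I.zero_mem
  · intro F hF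
    rw [mem_coeffIdeal] at hF
    have hsplit : F = (∑ v ∈ F.support.filter (fun v => (v.sum fun _ e => e) < r),
          monomial v (coeff v F))
        + ∑ v ∈ F.support.filter (fun v => ¬ (v.sum fun _ e => e) < r),
          monomial v (coeff v F) := by
      rw [Finset.sum_filter_add_sum_filter_not]
      exact F.as_sum
    rw [hsplit]
    apply Ideal.add_mem
    · apply Ideal.mem_sup_left
      apply Ideal.sum_mem
      intro v hv
      rw [Finset.mem_filter] at hv
      have : (monomial v (coeff v F) : MvPolynomial σ A) = C (coeff v F) * monomial v 1 := by
        rw [C_mul_monomial, mul_one]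
      rw [this]
      exact Ideal.mul_mem_right _ _ (Ideal.mem_map_of_mem _ (hF v hv.2))
    · apply Ideal.mem_sup_right
      apply Ideal.sum_mem
      intro v hv
      rw [Finset.mem_filter] at hv
      exact aux_monomial_mem_span_X_pow (by omega) _

end Generic

/-- The join `I * J` of two ideals of `K[x_1,...,x_n]`: the contraction to `K[x]`
(embedded via `x_i`) of `I(y) + J(z) + (x_i - y_i - z_i)` in `K[x,y,z]`. -/
noncomputable def joinIdeal {K : Type*} [Field K] {n : ℕ}
    (I J : Ideal (MvPolynomial (Fin n) K)) : Ideal (MvPolynomial (Fin n) K) :=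
  Ideal.comap (rename (fun i : Fin n => ((0 : Fin 3), i)) :
      MvPolynomial (Fin n) K →ₐ[K] MvPolynomial (Fin 3 × Fin n) K).toRingHom
    (Ideal.map (rename (fun i : Fin n => ((1 : Fin 3), i)) :
        MvPolynomial (Fin n) K →ₐ[K] MvPolynomial (Fin 3 × Fin n) K).toRingHom I ⊔
     Ideal.map (rename (fun i : Fin n => ((2 : Fin 3), i)) :
        MvPolynomial (Fin n) K →ₐ[K] MvPolynomial (Fin 3 × Fin n) K).toRingHom J ⊔
     Ideal.span {p | ∃ i : Fin n,
       p = X ((0 : Fin 3), i) - X ((1 : Fin 3), i) - X ((2 : Fin 3), i)})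

/-- The irrelevant maximal ideal `m = (x_1,...,x_n)`. -/
noncomputable def irrelevant (K : Type*) [Field K] (n : ℕ) : Ideal (MvPolynomial (Fin n) K) :=
  Ideal.span (Set.range X)

/-- The maximal ideal of the point `p`. -/
noncomputable def pointIdeal {K : Type*} [Field K] {n : ℕ} (p : Fin n → K) :
    Ideal (MvPolynomial (Fin n) K) :=
  Ideal.span {q | ∃ i : Fin n, q = X i - C (p i)}

/-- The affine zero set of an ideal. -/
def zeroSet {K : Type*} [Field K] {n : ℕ} (I : Ideal (MvPolynomial (Fin n) K)) :
    Set (Fin n → K) :=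
  {p | ∀ f ∈ I, eval p f = 0}

/-- The symbolic power of a radical ideal, via the Zariski--Nagata description
as the intersection of the `r`-th powers of the maximal ideals of points of `V(I)`. -/
noncomputable def pointsSymbolicPower {K : Type*} [Field K] {n : ℕ}
    (I : Ideal (MvPolynomial (Fin n) K)) (r : ℕ) : Ideal (MvPolynomial (Fin n) K) :=
  ⨅ (p : Fin n → K) (_ : p ∈ zeroSet I), pointIdeal p ^ r

/-! ### The Taylor expansion machinery -/

section Machinery

variable {K : Type*} [Field K] {n : ℕ}

/-- `x_i ↦ u_i + v_i : K[x] → K[u][v]` where the `u`'s are coefficients. -/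
noncomputable def Phi (K : Type*) [Field K] (n : ℕ) :
    MvPolynomial (Fin n) K →ₐ[K] MvPolynomial (Fin n) (MvPolynomial (Fin n) K) :=
  aeval (fun i => C (X i) + X i)

noncomputable def psi (K : Type*) [Field K] (n : ℕ) :
    MvPolynomial (Fin 3 × Fin n) K →ₐ[K] MvPolynomial (Fin n) (MvPolynomial (Fin n) K) :=
  aeval (fun q => ![C (X q.2) + X q.2, C (X q.2), X q.2] q.1)

noncomputable def sigmaSec (K : Type*) [Field K] (n : ℕ) :
    MvPolynomial (Fin n) (MvPolynomial (Fin n) K) →+* MvPolynomial (Fin 3 × Fin n) K :=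
  eval₂Hom (rename (fun i : Fin n => ((1 : Fin 3), i)) :
      MvPolynomial (Fin n) K →ₐ[K] MvPolynomial (Fin 3 × Fin n) K).toRingHom
    (fun i => X ((2 : Fin 3), i))

/-- The defining ideal of the diagonal relation. -/
noncomputable def relD (K : Type*) [Field K] (n : ℕ) : Ideal (MvPolynomial (Fin 3 × Fin n) K) :=
  Ideal.span {p | ∃ i : Fin n,
    p = X ((0 : Fin 3), i) - X ((1 : Fin 3), i) - X ((2 : Fin 3), i)}

theorem psi_X0 (i : Fin n) : psi K n (X ((0 : Fin 3), i)) = C (X i) + X i := by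
  simp [psi]

theorem psi_X1 (i : Fin n) : psi K n (X ((1 : Fin 3), i)) = C (X i) := by
  simp [psi]

theorem psi_X2 (i : Fin n) : psi K n (X ((2 : Fin 3), i)) = X i := by
  simp [psi]

theorem sigmaSec_C (f : MvPolynomial (Fin n) K) :
    sigmaSec K n (C f) = rename (fun i : Fin n => ((1 : Fin 3), i)) f := by
  simp [sigmaSec]

theorem sigmaSec_X (i : Fin n) :
    sigmaSec K n (X i) = X ((2 : Fin 3), i) := by
  simp [sigmaSec]

theorem psi_sigmaSec (F : MvPolynomial (Fin n) (MvPolynomial (Fin n) K)) :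
    psi K n (sigmaSec K n F) = F := by
  have hCC : ((psi K n).toRingHom.comp (sigmaSec K n)).comp
      (C : MvPolynomial (Fin n) K →+* MvPolynomial (Fin n) (MvPolynomial (Fin n) K))
      = (C : MvPolynomial (Fin n) K →+* _) := by
    apply MvPolynomial.ringHom_ext
    · intro a
      simp [sigmaSec_C, psi]
    · intro i
      simp only [RingHom.comp_apply, RingHom.coe_coe, sigmaSec_C, rename_X]
      exact psi_X1 i
  have : (psi K n).toRingHom.comp (sigmaSec K n) = RingHom.id _ := by
    apply MvPolynomial.ringHom_ext
    · intro a
      exact RingHom.congr_fun hCC a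
    · intro i
      simp only [RingHom.comp_apply, RingHom.coe_coe, sigmaSec_X, RingHom.id_apply]
      exact psi_X2 i
  exact RingHom.congr_fun this F

theorem psi_surjective : Function.Surjective ⇑(psi K n).toRingHom :=
  fun F => ⟨sigmaSec K n F, psi_sigmaSec F⟩

theorem ker_psi : RingHom.ker (psi K n).toRingHom = relD K n := by
  apply le_antisymm
  · intro s hs
    rw [RingHom.mem_ker] at hs
    have key : (Ideal.Quotient.mk (relD K n))
        = (Ideal.Quotient.mk (relD K n)).comp ((sigmaSec K n).comp (psi K n).toRingHom) := by
      apply MvPolynomial.ringHom_ext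
      · intro a
        show (Ideal.Quotient.mk (relD K n)) (C a)
            = (Ideal.Quotient.mk (relD K n)) (sigmaSec K n (psi K n (C a)))
        rw [show ((psi K n) (C a) : MvPolynomial (Fin n) (MvPolynomial (Fin n) K)) = C (C a) by
          simp [psi], sigmaSec_C, rename_C]
      · rintro ⟨j, i⟩
        fin_cases j
        · show (Ideal.Quotient.mk (relD K n)) (X ((0 : Fin 3), i))
              = (Ideal.Quotient.mk (relD K n)) (sigmaSec K n (psi K n (X ((0 : Fin 3), i))))
          rw [psi_X0, map_add, sigmaSec_C, sigmaSec_X, rename_X, Ideal.Quotient.eq]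
          apply Ideal.subset_span
          exact ⟨i, by ring⟩
        · show (Ideal.Quotient.mk (relD K n)) (X ((1 : Fin 3), i))
              = (Ideal.Quotient.mk (relD K n)) (sigmaSec K n (psi K n (X ((1 : Fin 3), i))))
          rw [psi_X1, sigmaSec_C, rename_X]
        · show (Ideal.Quotient.mk (relD K n)) (X ((2 : Fin 3), i))
              = (Ideal.Quotient.mk (relD K n)) (sigmaSec K n (psi K n (X ((2 : Fin 3), i))))
          rw [psi_X2, sigmaSec_X]
    have : Ideal.Quotient.mk (relD K n) s = 0 := by
      rw [RingHom.congr_fun key s, RingHom.comp_apply, RingHom.comp_apply, hs, map_zero, map_zero]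
    rwa [Ideal.Quotient.eq_zero_iff_mem] at this
  · rw [relD, Ideal.span_le]
    rintro _ ⟨i, rfl⟩
    simp only [SetLike.mem_coe, RingHom.mem_ker, map_sub]
    rw [show ((psi K n).toRingHom (X ((0 : Fin 3), i))
        : MvPolynomial (Fin n) (MvPolynomial (Fin n) K)) = C (X i) + X i from psi_X0 i,
      show ((psi K n).toRingHom (X ((1 : Fin 3), i))
        : MvPolynomial (Fin n) (MvPolynomial (Fin n) K)) = C (X i) from psi_X1 i,
      show ((psi K n).toRingHom (X ((2 : Fin 3), i))
        : MvPolynomial (Fin n) (MvPolynomial (Fin n) K)) = X i from psi_X2 i]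
    ring

theorem join_eq_comap (I J : Ideal (MvPolynomial (Fin n) K)) :
    joinIdeal I J = Ideal.comap (Phi K n).toRingHom
      (I.map (C : MvPolynomial (Fin n) K →+* MvPolynomial (Fin n) (MvPolynomial (Fin n) K))
        ⊔ J.map (MvPolynomial.map (C : K →+* MvPolynomial (Fin n) K))) := by
  have h0 : (psi K n).toRingHom.comp (rename (fun i : Fin n => ((0 : Fin 3), i)) :
      MvPolynomial (Fin n) K →ₐ[K] MvPolynomial (Fin 3 × Fin n) K).toRingHom
      = (Phi K n).toRingHom := by
    apply MvPolynomial.ringHom_ext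
    · intro a; simp [psi, Phi]
    · intro i
      show psi K n (rename (fun i : Fin n => ((0 : Fin 3), i)) (X i)) = Phi K n (X i)
      rw [rename_X, psi_X0, Phi, aeval_X]
  have h1 : (psi K n).toRingHom.comp (rename (fun i : Fin n => ((1 : Fin 3), i)) :
      MvPolynomial (Fin n) K →ₐ[K] MvPolynomial (Fin 3 × Fin n) K).toRingHom
      = (C : MvPolynomial (Fin n) K →+* MvPolynomial (Fin n) (MvPolynomial (Fin n) K)) := by
    apply MvPolynomial.ringHom_ext
    · intro a; simp [psi]
    · intro i
      show psi K n (rename (fun i : Fin n => ((1 : Fin 3), i)) (X i)) = C (X i)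
      rw [rename_X, psi_X1]
  have h2 : (psi K n).toRingHom.comp (rename (fun i : Fin n => ((2 : Fin 3), i)) :
      MvPolynomial (Fin n) K →ₐ[K] MvPolynomial (Fin 3 × Fin n) K).toRingHom
      = (MvPolynomial.map (C : K →+* MvPolynomial (Fin n) K)) := by
    apply MvPolynomial.ringHom_ext
    · intro a; simp [psi]
    · intro i
      show psi K n (rename (fun i : Fin n => ((2 : Fin 3), i)) (X i))
          = MvPolynomial.map (C : K →+* MvPolynomial (Fin n) K) (X i)
      rw [rename_X, psi_X2, map_X]
  unfold joinIdeal
  rw [← h0, ← Ideal.comap_comap]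
  congr 1
  rw [← h1, ← h2, ← Ideal.map_map, ← Ideal.map_map, ← Ideal.map_sup,
    Ideal.comap_map_of_surjective (psi K n).toRingHom psi_surjective,
    ← RingHom.ker_eq_comap_bot, ker_psi]
  rfl

/-- translation by `p` as an algebra automorphism of `K[x]`. -/
noncomputable def transl (p : Fin n → K) :
    MvPolynomial (Fin n) K ≃ₐ[K] MvPolynomial (Fin n) K :=
  AlgEquiv.ofAlgHom (aeval fun i => X i + C (p i)) (aeval fun i => X i - C (p i))
    (by apply MvPolynomial.algHom_ext; intro i; simp)
    (by apply MvPolynomial.algHom_ext; intro i; simp)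

theorem transl_apply (p : Fin n → K) (f : MvPolynomial (Fin n) K) :
    transl p f = aeval (fun i => X i + C (p i)) f := rfl

theorem map_transl_pointIdeal (p : Fin n → K) :
    Ideal.map (transl p : MvPolynomial (Fin n) K ≃+* MvPolynomial (Fin n) K)
        (pointIdeal p)
      = Ideal.span (Set.range X) := by
  rw [pointIdeal, Ideal.map_span]
  congr 1
  ext q
  constructor
  · rintro ⟨_, ⟨i, rfl⟩, rfl⟩
    refine ⟨i, Eq.symm ?_⟩
    show transl p (X i - C (p i)) = X i
    rw [map_sub, transl_apply, transl_apply, aeval_X, aeval_C]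
    simp [algebraMap_eq]
  · rintro ⟨i, rfl⟩
    refine ⟨X i - C (p i), ⟨i, rfl⟩, ?_⟩
    show transl p (X i - C (p i)) = X i
    rw [map_sub, transl_apply, transl_apply, aeval_X, aeval_C]
    simp [algebraMap_eq]

theorem mem_pointIdeal_pow {p : Fin n → K} {r : ℕ} {f : MvPolynomial (Fin n) K} :
    f ∈ pointIdeal p ^ r
      ↔ ∀ β : Fin n →₀ ℕ, (β.sum fun _ e => e) < r
          → coeff β (aeval (fun i => X i + C (p i)) f) = 0 := by
  have e : f ∈ pointIdeal p ^ r ↔ transl p f ∈ Ideal.map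
      (transl p : MvPolynomial (Fin n) K ≃+* MvPolynomial (Fin n) K) (pointIdeal p ^ r) :=
    (Ideal.apply_mem_of_equiv_iff
      (f := (transl p : MvPolynomial (Fin n) K ≃+* MvPolynomial (Fin n) K))).symm
  rw [e, Ideal.map_pow, map_transl_pointIdeal, aux_mem_span_X_pow]
  rfl

theorem mem_join_irrel_pow {I : Ideal (MvPolynomial (Fin n) K)} {r : ℕ}
    {f : MvPolynomial (Fin n) K} :
    f ∈ joinIdeal I (irrelevant K n ^ r)
      ↔ ∀ β : Fin n →₀ ℕ, (β.sum fun _ e => e) < r → coeff β (Phi K n f) ∈ I := by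
  rw [join_eq_comap, Ideal.mem_comap]
  have hmap : Ideal.map (MvPolynomial.map (C : K →+* MvPolynomial (Fin n) K))
        (irrelevant K n ^ r)
      = (Ideal.span (Set.range X)
          : Ideal (MvPolynomial (Fin n) (MvPolynomial (Fin n) K))) ^ r := by
    rw [Ideal.map_pow]
    congr 1
    rw [irrelevant, Ideal.map_span]
    congr 1
    ext q
    constructor
    · rintro ⟨_, ⟨i, rfl⟩, rfl⟩
      exact ⟨i, (MvPolynomial.map_X _ i).symm⟩
    · rintro ⟨i, rfl⟩
      exact ⟨X i, ⟨i, rfl⟩, MvPolynomial.map_X _ i⟩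
  rw [hmap, sup_eq_coeffIdeal, mem_coeffIdeal]
  rfl

theorem eval_coeff_Phi (p : Fin n → K) (f : MvPolynomial (Fin n) K) (β : Fin n →₀ ℕ) :
    eval p (coeff β (Phi K n f)) = coeff β (aeval (fun i => X i + C (p i)) f) := by
  rw [← MvPolynomial.coeff_map]
  congr 1
  have : (MvPolynomial.map (eval p : MvPolynomial (Fin n) K →+* K)).comp (Phi K n).toRingHom
      = (aeval (fun i => X i + C (p i))
          : MvPolynomial (Fin n) K →ₐ[K] MvPolynomial (Fin n) K).toRingHom := by
    apply MvPolynomial.ringHom_ext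
    · intro a; simp [Phi]
    · intro i
      show MvPolynomial.map (eval p : MvPolynomial (Fin n) K →+* K) (Phi K n (X i))
          = aeval (fun i => X i + C (p i)) (X i)
      rw [Phi, aeval_X, aeval_X, map_add, MvPolynomial.map_C, MvPolynomial.map_X]
      simp [add_comm]
  exact RingHom.congr_fun this f

end Machinery

/-- for a radical ideal over an algebraically closed field,
the symbolic power equals the join with the power of the irrelevant maximal ideal. -/
theorem symbolicPower_eq_join {K : Type*} [Field K] [IsAlgClosed K] {n : ℕ}
    (I : Ideal (MvPolynomial (Fin n) K)) (hI : I.IsRadical) (r : ℕ) :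
    pointsSymbolicPower I r = joinIdeal I (irrelevant K n ^ r) := by
  ext f
  rw [pointsSymbolicPower]
  simp only [Ideal.mem_iInf]
  rw [mem_join_irrel_pow]
  constructor
  · intro h β hβ
    have hv : coeff β (Phi K n f) ∈ MvPolynomial.vanishingIdeal K (MvPolynomial.zeroLocus K I) := by
      rw [MvPolynomial.mem_vanishingIdeal_iff]
      intro p hp
      change eval p (coeff β (Phi K n f)) = 0
      rw [eval_coeff_Phi]
      exact mem_pointIdeal_pow.mp (h p hp) β hβ
    rwa [MvPolynomial.vanishingIdeal_zeroLocus_eq_radical, hI.radical] at hv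
  · intro h p hp
    rw [mem_pointIdeal_pow]
    intro β hβ
    rw [← eval_coeff_Phi]
    exact hp _ (h β hβ)
end

section
/- Let I ⊆ m^2 be a homogeneous radical ideal in a polynomial ring over an algebraically closed field. Then for all r, s ≥ 1, the secant ideal I^{{r+s-1}} is contained in the s-th symbolic power of the r-th secant ideal: I^{{r+s-1}} ⊆ (I^{{r}})^{(s)}. -/
open MvPolynomial

/-- The `(r+1)`-st secant ideal: `secantIdeal I r` is the `(r+1)`-fold join of `I`
with itself, so that `secantIdeal I 0 = I`. -/
noncomputable def secantIdeal {K : Type*} [Field K] {n : ℕ}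
    (I : Ideal (MvPolynomial (Fin n) K)) : ℕ → Ideal (MvPolynomial (Fin n) K)
  | 0 => I
  | r + 1 => joinIdeal I (secantIdeal I r)

/-- A homogeneous ideal: one containing all homogeneous components of its elements. -/
def IsHomogeneousIdeal {K : Type*} [Field K] {n : ℕ}
    (I : Ideal (MvPolynomial (Fin n) K)) : Prop :=
  ∀ f ∈ I, ∀ d : ℕ, homogeneousComponent d f ∈ I


namespace SecantAux

variable {K : Type*} [Field K] {n : ℕ}
lemma degree_add (a b : Fin n →₀ ℕ) : (a + b).degree = a.degree + b.degree := by
  simp only [Finsupp.degree_eq_weight_one, map_add]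

lemma monomial_mem_irr_pow {γ : Fin n →₀ ℕ} (c : K) :
    monomial γ c ∈ irrelevant K n ^ γ.degree := by
  classical
  rw [monomial_eq]
  apply Ideal.mul_mem_left
  rw [Finsupp.prod, Finsupp.degree_apply]
  induction γ.support using Finset.induction with
  | empty => simp
  | insert _ _ hx ih =>
      rw [Finset.prod_insert hx, Finset.sum_insert hx, pow_add]
      exact Ideal.mul_mem_mul (Ideal.pow_mem_pow (Ideal.subset_span (Set.mem_range_self _)) _) ih

lemma mem_irr_pow_of_support {f : MvPolynomial (Fin n) K} {j : ℕ}
    (h : ∀ γ ∈ f.support, j ≤ γ.degree) : f ∈ irrelevant K n ^ j := by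
  rw [f.as_sum]
  refine Ideal.sum_mem _ fun γ hγ => ?_
  exact Ideal.pow_le_pow_right (h γ hγ) (monomial_mem_irr_pow _)

lemma support_irr_pow {f : MvPolynomial (Fin n) K} {j : ℕ} (hf : f ∈ irrelevant K n ^ j) :
    ∀ γ ∈ f.support, j ≤ γ.degree := by
  classical
  induction j generalizing f with
  | zero => intro γ _; exact Nat.zero_le _
  | succ j ih =>
      rw [pow_succ] at hf
      refine Submodule.mul_induction_on hf ?_ ?_
      · intro a ha b hb γ hγ
        have := support_mul a b hγ
        simp only [Finset.mem_add] at this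
        obtain ⟨α, hα, β, hβ, rfl⟩ := this
        have h1 : 1 ≤ β.degree := by
          have := (mem_ideal_span_X_image (s := (Set.univ : Set (Fin n)))).1
            (by simpa [Set.image_univ, irrelevant] using hb) β hβ
          obtain ⟨i, -, hi⟩ := this
          calc 1 ≤ β i := Nat.one_le_iff_ne_zero.2 hi
          _ ≤ β.degree := Finsupp.le_degree _ _
        rw [degree_add]
        have := ih ha α hα
        omega
      · intro a b ha hb γ hγ
        rcases Finset.mem_union.1 (Finsupp.support_add hγ) with h | h
        exacts [ha γ h, hb γ h]

lemma mem_irr_pow_iff {f : MvPolynomial (Fin n) K} {j : ℕ} :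
    f ∈ irrelevant K n ^ j ↔ ∀ γ ∈ f.support, j ≤ γ.degree :=
  ⟨support_irr_pow, mem_irr_pow_of_support⟩

lemma coeff_eq_zero_of_mem_irr_pow {f : MvPolynomial (Fin n) K} {j : ℕ}
    (hf : f ∈ irrelevant K n ^ j) {γ : Fin n →₀ ℕ} (hγ : γ.degree < j) : coeff γ f = 0 := by
  by_contra h
  exact absurd (support_irr_pow hf γ (mem_support_iff.2 h)) (by omega)


/-- Translation substitution `f(X) ↦ f(X + p)`. -/
noncomputable def T (p : Fin n → K) :
    MvPolynomial (Fin n) K →ₐ[K] MvPolynomial (Fin n) K :=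
  aeval (fun i => X i + C (p i))

@[simp] lemma T_X (p : Fin n → K) (i : Fin n) : T p (X i) = X i + C (p i) := by
  simp [T]

lemma aeval_eq_eval (x : Fin n → K) (f : MvPolynomial (Fin n) K) :
    aeval x f = eval x f := by
  rw [← coe_aeval_eq_eval]; rfl

lemma T_comp_T (p q : Fin n → K) (f : MvPolynomial (Fin n) K) :
    T p (T q f) = T (p + q) f := by
  have h : (T p).comp (T q) = T (p + q) := by
    apply MvPolynomial.algHom_ext
    intro i
    simp [T, add_assoc]
  have := DFunLike.congr_fun h f
  simpa using this

@[simp] lemma T_zero (f : MvPolynomial (Fin n) K) : T (0 : Fin n → K) f = f := by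
  have h : T (0 : Fin n → K) = AlgHom.id K _ := by
    apply MvPolynomial.algHom_ext; intro i; simp [T]
  rw [h]; rfl

lemma T_neg_T (p : Fin n → K) (f : MvPolynomial (Fin n) K) : T (-p) (T p f) = f := by
  rw [T_comp_T, neg_add_cancel, T_zero]

lemma eval_T (q p : Fin n → K) (f : MvPolynomial (Fin n) K) :
    eval q (T p f) = eval (q + p) f := by
  have h : (aeval q : MvPolynomial (Fin n) K →ₐ[K] K).comp (T p) = aeval (q + p) := by
    apply MvPolynomial.algHom_ext
    intro i
    simp [T]
  calc eval q (T p f) = aeval q (T p f) := (aeval_eq_eval _ _).symm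
  _ = aeval (q + p) f := by rw [← AlgHom.comp_apply, h]
  _ = eval (q + p) f := aeval_eq_eval _ _

lemma eval_zero' (f : MvPolynomial (Fin n) K) : eval (0 : Fin n → K) f = coeff 0 f := by
  rw [eval_eq]
  rw [Finset.sum_eq_single (0 : Fin n →₀ ℕ)]
  · simp
  · intro γ hγ hne
    have h2 : γ.support.Nonempty := Finsupp.support_nonempty_iff.2 hne
    obtain ⟨i, hi⟩ := h2
    rw [Finset.prod_eq_zero hi]
    · ring
    · simp [zero_pow (Finsupp.mem_support_iff.1 hi)]
  · intro h; simp [MvPolynomial.notMem_support_iff.1 h]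


lemma zeroSet_eq (I : Ideal (MvPolynomial (Fin n) K)) : zeroSet I = zeroLocus K I := rfl

/-- Substituting a common zero `q` of `J` into the join: `f(X+q) ∈ L`. -/
lemma T_mem_of_mem_join {J L : Ideal (MvPolynomial (Fin n) K)} {q : Fin n → K}
    (hq : ∀ g ∈ J, eval q g = 0) {f : MvPolynomial (Fin n) K}
    (hf : f ∈ joinIdeal J L) : T q f ∈ L := by
  classical
  set u : Fin 3 × Fin n → MvPolynomial (Fin n) K := fun ji =>
    if ji.1 = 0 then X ji.2 + C (q ji.2) else if ji.1 = 1 then C (q ji.2) else X ji.2 with hu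
  set ψ : MvPolynomial (Fin 3 × Fin n) K →ₐ[K] MvPolynomial (Fin n) K := aeval u with hψ
  rw [joinIdeal, Ideal.mem_comap] at hf
  have hCq : (aeval (fun i : Fin n => (C (q i) : MvPolynomial (Fin n) K))) =
      (Algebra.ofId K (MvPolynomial (Fin n) K)).comp (aeval q) := by
    apply MvPolynomial.algHom_ext
    intro i
    simp [Algebra.ofId_apply, algebraMap_eq]
  have hbig : (Ideal.map (rename (fun i : Fin n => ((1 : Fin 3), i)) :
        MvPolynomial (Fin n) K →ₐ[K] MvPolynomial (Fin 3 × Fin n) K).toRingHom J ⊔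
      Ideal.map (rename (fun i : Fin n => ((2 : Fin 3), i)) :
        MvPolynomial (Fin n) K →ₐ[K] MvPolynomial (Fin 3 × Fin n) K).toRingHom L ⊔
      Ideal.span {p | ∃ i : Fin n,
        p = X ((0 : Fin 3), i) - X ((1 : Fin 3), i) - X ((2 : Fin 3), i)}) ≤
      Ideal.comap ψ.toRingHom L := by
    refine sup_le (sup_le ?_ ?_) ?_
    · rw [Ideal.map_le_iff_le_comap]
      intro g hg
      simp only [Ideal.mem_comap, AlgHom.toRingHom_eq_coe, RingHom.coe_coe]
      have : ψ (rename (fun i : Fin n => ((1 : Fin 3), i)) g) =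
          aeval (fun i : Fin n => (C (q i) : MvPolynomial (Fin n) K)) g := by
        rw [hψ, aeval_rename]
        have harg : (u ∘ fun i : Fin n => ((1 : Fin 3), i)) =
            fun i : Fin n => (C (q i) : MvPolynomial (Fin n) K) := by
          funext i; simp [hu]
        rw [harg]
      rw [this, hCq]
      have hg0 : (aeval q) g = 0 := by
        rw [show ((aeval q) g : K) = eval q g from by rw [← coe_aeval_eq_eval]; rfl]
        exact hq g hg
      simp [hg0, hq g hg]
    · rw [Ideal.map_le_iff_le_comap]
      intro g hg
      simp only [Ideal.mem_comap, AlgHom.toRingHom_eq_coe, RingHom.coe_coe]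
      have : ψ (rename (fun i : Fin n => ((2 : Fin 3), i)) g) = g := by
        rw [hψ, aeval_rename]
        have : (u ∘ fun i : Fin n => ((2 : Fin 3), i)) = X := by
          funext i; simp [hu]
        rw [this, aeval_X_left_apply]
      rwa [this]
    · rw [Ideal.span_le]
      rintro p ⟨i, rfl⟩
      have hz : ψ (X ((0 : Fin 3), i) - X ((1 : Fin 3), i) - X ((2 : Fin 3), i)) = 0 := by
        simp [hψ, hu]
      show _ ∈ Ideal.comap ψ.toRingHom L
      rw [Ideal.mem_comap]
      show ψ _ ∈ L
      rw [hz]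
      exact L.zero_mem
  have hmem := hbig hf
  simp only [Ideal.mem_comap, AlgHom.toRingHom_eq_coe, RingHom.coe_coe] at hmem
  have hfin : ψ (rename (fun i : Fin n => ((0 : Fin 3), i)) f) = T q f := by
    rw [hψ, aeval_rename]
    have harg : (u ∘ fun i : Fin n => ((0 : Fin 3), i)) =
        fun i : Fin n => (X i + C (q i) : MvPolynomial (Fin n) K) := by
      funext i; simp [hu]
    rw [harg]
    rfl
  rwa [hfin] at hmem

/-- `g` vanishing on pairwise sums of zero sets lies in the radical of the join. -/
lemma mem_radical_join_of_vanish {J L : Ideal (MvPolynomial (Fin n) K)} [IsAlgClosed K]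
    {g : MvPolynomial (Fin n) K}
    (hg : ∀ a ∈ zeroSet J, ∀ b ∈ zeroSet L, eval (a + b) g = 0) :
    g ∈ (joinIdeal J L).radical := by
  classical
  set B := (Ideal.map (rename (fun i : Fin n => ((1 : Fin 3), i)) :
        MvPolynomial (Fin n) K →ₐ[K] MvPolynomial (Fin 3 × Fin n) K).toRingHom J ⊔
      Ideal.map (rename (fun i : Fin n => ((2 : Fin 3), i)) :
        MvPolynomial (Fin n) K →ₐ[K] MvPolynomial (Fin 3 × Fin n) K).toRingHom L ⊔
      Ideal.span {p | ∃ i : Fin n,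
        p = X ((0 : Fin 3), i) - X ((1 : Fin 3), i) - X ((2 : Fin 3), i)}) with hB
  have key : rename (fun i : Fin n => ((0 : Fin 3), i)) g ∈ vanishingIdeal K (zeroLocus K B) := by
    rw [mem_vanishingIdeal_iff]
    intro P hP
    rw [mem_zeroLocus_iff] at hP
    set a : Fin n → K := fun i => P ((1 : Fin 3), i) with haa
    set b : Fin n → K := fun i => P ((2 : Fin 3), i) with hbb
    have ha : a ∈ zeroSet J := by
      intro h hh
      have := hP _ (Ideal.mem_sup_left (Ideal.mem_sup_left (Ideal.mem_map_of_mem _ hh)))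
      rwa [show ((rename (fun i : Fin n => ((1 : Fin 3), i)) :
        MvPolynomial (Fin n) K →ₐ[K] MvPolynomial (Fin 3 × Fin n) K).toRingHom h) =
        rename (fun i : Fin n => ((1 : Fin 3), i)) h from rfl, aeval_rename, aeval_eq_eval] at this
    have hb : b ∈ zeroSet L := by
      intro h hh
      have := hP _ (Ideal.mem_sup_left (Ideal.mem_sup_right (Ideal.mem_map_of_mem _ hh)))
      rwa [show ((rename (fun i : Fin n => ((2 : Fin 3), i)) :
        MvPolynomial (Fin n) K →ₐ[K] MvPolynomial (Fin 3 × Fin n) K).toRingHom h) =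
        rename (fun i : Fin n => ((2 : Fin 3), i)) h from rfl, aeval_rename, aeval_eq_eval] at this
    have hP0 : (fun i => P ((0 : Fin 3), i)) = a + b := by
      funext i
      have := hP _ (Ideal.mem_sup_right (Ideal.subset_span ⟨i, rfl⟩))
      simp only [map_sub, eval_X, aeval_X] at this
      simp only [Pi.add_apply, haa, hbb]
      linear_combination this
    rw [aeval_rename, aeval_eq_eval]
    show eval (fun i => P ((0 : Fin 3), i)) g = 0
    rw [hP0]
    exact hg a ha b hb
  rw [vanishingIdeal_zeroLocus_eq_radical] at key
  obtain ⟨m, hm⟩ := key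
  refine ⟨m, ?_⟩
  rw [joinIdeal, Ideal.mem_comap]
  show rename (fun i : Fin n => ((0 : Fin 3), i)) (g ^ m) ∈ B
  rwa [map_pow]



/-- Sums of `r+1` points of the zero set of `I`. -/
def SumPts (I : Ideal (MvPolynomial (Fin n) K)) : ℕ → Set (Fin n → K)
  | 0 => zeroSet I
  | r + 1 => {x | ∃ a ∈ zeroSet I, ∃ b ∈ SumPts I r, x = a + b}

lemma eval_smul_of_isHomogeneous {f : MvPolynomial (Fin n) K} {d : ℕ}
    (hf : f.IsHomogeneous d) (t : K) (x : Fin n → K) :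
    eval (t • x) f = t ^ d * eval x f := by
  rw [eval_eq, eval_eq, Finset.mul_sum]
  apply Finset.sum_congr rfl
  intro γ hγ
  have hdeg : γ.degree = d := by
    by_contra h
    exact mem_support_iff.1 hγ (hf.coeff_eq_zero h)
  have : ∏ i ∈ γ.support, (t • x) i ^ γ i =
      t ^ γ.degree * ∏ i ∈ γ.support, x i ^ γ i := by
    rw [Finsupp.degree_apply, ← Finset.prod_pow_eq_pow_sum, ← Finset.prod_mul_distrib]
    apply Finset.prod_congr rfl
    intro i _
    rw [Pi.smul_apply, smul_eq_mul, mul_pow]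
  rw [this, hdeg]
  ring

variable {I : Ideal (MvPolynomial (Fin n) K)}

lemma smul_mem_zeroSet (hhom : IsHomogeneousIdeal I) {v : Fin n → K}
    (hv : v ∈ zeroSet I) (t : K) : t • v ∈ zeroSet I := by
  intro f hf
  conv_lhs => rw [← sum_homogeneousComponent f]
  rw [map_sum]
  refine Finset.sum_eq_zero fun d _ => ?_
  rw [eval_smul_of_isHomogeneous (homogeneousComponent_isHomogeneous d f) t v,
    hv _ (hhom f hf d), mul_zero]

lemma smul_mem_sumPts (hhom : IsHomogeneousIdeal I) :
    ∀ r, ∀ x ∈ SumPts I r, ∀ t : K, t • x ∈ SumPts I r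
  | 0, x, hx, t => smul_mem_zeroSet hhom hx t
  | r + 1, x, hx, t => by
      obtain ⟨a, ha, b, hb, rfl⟩ := hx
      exact ⟨t • a, smul_mem_zeroSet hhom ha t,
        t • b, smul_mem_sumPts hhom r b hb t, smul_add t a b⟩

lemma zero_mem_zeroSet (hm2 : I ≤ irrelevant K n ^ 2) : (0 : Fin n → K) ∈ zeroSet I :=
  fun f hf => by
    rw [eval_zero', coeff_eq_zero_of_mem_irr_pow (hm2 hf) (by simp)]

lemma zero_mem_sumPts (hm2 : I ≤ irrelevant K n ^ 2) :
    ∀ r, (0 : Fin n → K) ∈ SumPts I r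
  | 0 => zero_mem_zeroSet hm2
  | r + 1 => ⟨0, zero_mem_zeroSet hm2, 0, zero_mem_sumPts hm2 r, (add_zero 0).symm⟩

lemma zeroSet_subset_sumPts (hm2 : I ≤ irrelevant K n ^ 2) :
    ∀ r, zeroSet I ⊆ SumPts I r
  | 0 => subset_rfl
  | r + 1 => fun v hv => ⟨v, hv, 0, zero_mem_sumPts hm2 r, (add_zero v).symm⟩

/-- Sums of points of `V(I)` belong to the zero set of the secant ideal. -/
lemma sumPts_subset_zeroSet_secant (I : Ideal (MvPolynomial (Fin n) K)) :
    ∀ r, SumPts I r ⊆ zeroSet (secantIdeal I r)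
  | 0 => subset_rfl
  | r + 1 => by
      rintro x ⟨a, ha, b, hb, rfl⟩
      intro f hf
      have h1 : T a f ∈ secantIdeal I r :=
        T_mem_of_mem_join (fun g hg => ha g hg) hf
      have h2 := sumPts_subset_zeroSet_secant I r hb _ h1
      rw [eval_T] at h2
      rwa [add_comm] at h2

/-- A polynomial vanishing on all `(r+1)`-fold sums of points of `V(I)` vanishes on
the whole zero set of the `r`-th secant ideal. -/
lemma eval_eq_zero_on_zeroSet_secant [IsAlgClosed K] (I : Ideal (MvPolynomial (Fin n) K)) :
    ∀ r, ∀ g : MvPolynomial (Fin n) K, (∀ q ∈ SumPts I r, eval q g = 0) →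
      ∀ p ∈ zeroSet (secantIdeal I r), eval p g = 0
  | 0, g, hg, p, hp => hg p hp
  | r + 1, g, hg, p, hp => by
      have hv : ∀ a ∈ zeroSet I, ∀ b ∈ zeroSet (secantIdeal I r), eval (a + b) g = 0 := by
        intro a ha b hb
        have hTa : ∀ q ∈ SumPts I r, eval q (T a g) = 0 := by
          intro q hq
          rw [eval_T]
          exact hg (q + a) ⟨a, ha, q, hq, add_comm q a⟩
        have h3 := eval_eq_zero_on_zeroSet_secant I r (T a g) hTa b hb
        rwa [eval_T, add_comm] at h3
      obtain ⟨m, hm⟩ := mem_radical_join_of_vanish hv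
      have h0 : eval p (g ^ m) = 0 := hp _ hm
      rw [map_pow] at h0
      rcases Nat.eq_zero_or_pos m with rfl | hmpos
      · rw [pow_zero] at h0
        exact absurd h0 one_ne_zero
      · exact (pow_eq_zero_iff (Nat.pos_iff_ne_zero.mp hmpos)).1 h0

lemma degree_single (i : Fin n) : (Finsupp.single i 1 : Fin n →₀ ℕ).degree = 1 := by
  rw [Finsupp.degree_apply, Finsupp.support_single_ne_zero i one_ne_zero]
  simp

lemma coeff_pderiv (i : Fin n) (f : MvPolynomial (Fin n) K) (δ : Fin n →₀ ℕ) :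
    coeff δ (pderiv i f) = coeff (δ + Finsupp.single i 1) f * ((δ i + 1 : ℕ) : K) := by
  induction f using MvPolynomial.induction_on' with
  | add p q hp hq => rw [map_add, coeff_add, coeff_add, hp, hq, add_mul]
  | monomial γ c =>
      rw [pderiv_monomial, coeff_monomial, coeff_monomial]
      by_cases h : γ = δ + Finsupp.single i 1
      · subst h
        rw [if_pos (add_tsub_cancel_right δ (Finsupp.single i 1)), if_pos rfl]
        congr 2
        simp [Finsupp.single_eq_same]
      · rw [if_neg h]
        by_cases h0 : γ i = 0
        · by_cases h1 : γ - Finsupp.single i 1 = δ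
          · rw [if_pos h1, h0]
            simp
          · rw [if_neg h1]
            simp
        · have h1 : γ - Finsupp.single i 1 ≠ δ := by
            intro he
            apply h
            rw [← he, tsub_add_cancel_of_le]
            rwa [Finsupp.single_le_iff, Nat.one_le_iff_ne_zero]
          rw [if_neg h1]
          simp
lemma isHomogeneous_pderiv {f : MvPolynomial (Fin n) K} {d : ℕ}
    (hf : f.IsHomogeneous (d + 1)) (i : Fin n) : (pderiv i f).IsHomogeneous d := by
  intro δ hδ
  rw [coeff_pderiv] at hδ
  have h1 : coeff (δ + Finsupp.single i 1) f ≠ 0 := fun h => hδ (by rw [h, zero_mul])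
  have h2 := hf h1
  rw [show (Finsupp.weight 1 : (Fin n →₀ ℕ) →+ ℕ) = Finsupp.degree from (Finsupp.degree_eq_weight_one).symm] at h2 ⊢
  rw [degree_add, degree_single] at h2
  omega

/-- The restriction of `f` to the line `x + t v`, as a polynomial in `t`. -/
noncomputable def lineP (x v : Fin n → K) :
    MvPolynomial (Fin n) K →ₐ[K] Polynomial K :=
  aeval (fun i => Polynomial.C (x i) + Polynomial.C (v i) * Polynomial.X)

lemma eval_lineP (x v : Fin n → K) (t : K) (f : MvPolynomial (Fin n) K) :
    (lineP x v f).eval t = eval (x + t • v) f := by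
  have h : (Polynomial.aeval t).comp (lineP x v) =
      (aeval (fun i => x i + t * v i) : MvPolynomial (Fin n) K →ₐ[K] K) := by
    apply MvPolynomial.algHom_ext
    intro i
    simp [lineP]
    ring
  have h2 := DFunLike.congr_fun h f
  simp only [AlgHom.comp_apply] at h2
  have h3 : Polynomial.aeval t (lineP x v f) = (lineP x v f).eval t :=
    congrFun (Polynomial.coe_aeval_eq_eval t) _
  rw [h3] at h2
  rw [h2, aeval_eq_eval]
  congr 1

lemma lineP_coeff_zero (x v : Fin n → K) (f : MvPolynomial (Fin n) K) :
    (lineP x v f).coeff 0 = eval x f := by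
  rw [Polynomial.coeff_zero_eq_eval_zero, eval_lineP]
  simp

lemma lineP_coeff_one (x v : Fin n → K) (f : MvPolynomial (Fin n) K) :
    (lineP x v f).coeff 1 = ∑ i, v i * eval x (pderiv i f) := by
  induction f using MvPolynomial.induction_on with
  | C c => simp [lineP]
  | add p q hp hq =>
      rw [map_add, Polynomial.coeff_add, hp, hq, ← Finset.sum_add_distrib]
      apply Finset.sum_congr rfl
      intro i _
      rw [map_add, map_add, mul_add]
  | mul_X p i hp =>
      rw [map_mul]
      have hXi : lineP x v (X i) = Polynomial.C (x i) + Polynomial.C (v i) * Polynomial.X := by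
        simp [lineP]
      rw [hXi, mul_add, Polynomial.coeff_add, mul_comm (lineP x v p) (Polynomial.C (x i)),
        Polynomial.coeff_C_mul, ← mul_assoc, mul_comm (lineP x v p) (Polynomial.C (v i)),
        mul_assoc, Polynomial.coeff_C_mul, Polynomial.coeff_mul_X, hp, lineP_coeff_zero]
      have hRHS : ∀ j : Fin n, v j * eval x (pderiv j (p * X i)) =
          x i * (v j * eval x (pderiv j p)) + v j * (eval x p * eval x (pderiv j (X i))) := by
        intro j
        rw [pderiv_mul, map_add, map_mul, map_mul, eval_X]
        ring
      rw [Finset.sum_congr rfl fun j _ => hRHS j, Finset.sum_add_distrib, ← Finset.mul_sum]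
      congr 1
      classical
      have : ∀ j : Fin n, v j * (eval x p * eval x (pderiv j (X i))) =
          if j = i then v j * eval x p else 0 := by
        intro j
        by_cases h : j = i
        · subst h; simp
        · simp [pderiv_X_of_ne (Ne.symm h), h]
      rw [Finset.sum_congr rfl fun j _ => this j, Finset.sum_ite_eq' Finset.univ i
        (fun j => v j * eval x p)]
      simp [mul_comm]

/-- Core char-free polarization lemma: a homogeneous polynomial of degree `d ≤ k+1`
vanishing on all `(k+1)`-fold sums of points of `V(I)` is zero. -/
lemma homog_vanish_eq_zero [IsAlgClosed K] {I : Ideal (MvPolynomial (Fin n) K)}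
    (hhom : IsHomogeneousIdeal I) (hrad : I.IsRadical) (hm2 : I ≤ irrelevant K n ^ 2)
    (d : ℕ) : ∀ k, ∀ f : MvPolynomial (Fin n) K, f.IsHomogeneous d → d ≤ k + 1 →
      (∀ x ∈ SumPts I k, eval x f = 0) → f = 0 := by
  induction d using Nat.strong_induction_on with
  | _ d IH =>
  intro k f hf hdk hvan
  by_cases hf0 : f = 0
  · exact hf0
  exfalso
  have hVI : ∀ g : MvPolynomial (Fin n) K, (∀ v ∈ zeroSet I, eval v g = 0) → g ∈ I := by
    intro g hg
    have h1 : g ∈ vanishingIdeal K (zeroLocus K I) := by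
      rw [mem_vanishingIdeal_iff]
      exact hg
    rw [vanishingIdeal_zeroLocus_eq_radical] at h1
    exact hrad h1
  rcases Nat.eq_zero_or_pos d with rfl | hd1
  · -- d = 0
    have h0 := hvan 0 (zero_mem_sumPts hm2 k)
    rw [eval_zero'] at h0
    apply hf0
    ext γ
    rcases eq_or_ne γ 0 with rfl | hγ
    · simpa using h0
    · rw [coeff_zero]
      exact hf.coeff_eq_zero (by
        rw [Ne, Finsupp.degree_eq_zero_iff]
        exact hγ)
  rcases eq_or_lt_of_le (Nat.succ_le_of_lt hd1) with hd1' | hd2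
  · -- d = 1
    have hfI : f ∈ I := hVI f (fun v hv => hvan v (zeroSet_subset_sumPts hm2 k hv))
    have hsupp : f.support = ∅ := Finset.eq_empty_of_forall_notMem (fun γ hγ => by
      have h2 := support_irr_pow (hm2 hfI) γ hγ
      have h1 : γ.degree = d := by
        by_contra h
        exact mem_support_iff.1 hγ (hf.coeff_eq_zero h)
      omega)
    exact hf0 (support_eq_empty.1 hsupp)
  -- d ≥ 2, so k ≥ 1
  obtain ⟨k', rfl⟩ : ∃ k', k = k' + 1 := ⟨k - 1, by omega⟩
  have hder : ∀ i : Fin n, ∀ x ∈ SumPts I k', eval x (pderiv i f) = 0 := by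
    intro i x hx
    have hline : ∀ v ∈ zeroSet I, ∀ t : K, eval (x + t • v) f = 0 := by
      intro v hv t
      have hmem : (t • v) + x ∈ SumPts I (k' + 1) :=
        ⟨t • v, smul_mem_zeroSet hhom hv t, x, hx, rfl⟩
      have h4 := hvan _ hmem
      rwa [add_comm] at h4
    have hLP : ∀ v ∈ zeroSet I, lineP x v f = 0 := by
      intro v hv
      apply Polynomial.funext
      intro t
      rw [Polynomial.eval_zero, eval_lineP]
      exact hline v hv t
    classical
    set Lx : MvPolynomial (Fin n) K := ∑ j, C (eval x (pderiv j f)) * X j with hLx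
    have hevalLx : ∀ v : Fin n → K, eval v Lx = ∑ j, v j * eval x (pderiv j f) := by
      intro v
      rw [hLx, map_sum]
      apply Finset.sum_congr rfl
      intro j _
      rw [map_mul, eval_C, eval_X]
      ring
    have hLxI : Lx ∈ I := hVI Lx (fun v hv => by
      have h5 := congrArg (fun P => Polynomial.coeff P 1) (hLP v hv)
      simp only [Polynomial.coeff_zero] at h5
      rw [lineP_coeff_one] at h5
      rw [hevalLx]
      exact h5)
    have hc := coeff_eq_zero_of_mem_irr_pow (hm2 hLxI) (γ := Finsupp.single i 1)
      (by rw [degree_single]; omega)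
    rw [hLx] at hc
    rw [coeff_sum] at hc
    have hcoeffj : ∀ j : Fin n, coeff (Finsupp.single i 1) (C (eval x (pderiv j f)) * X j) =
        if j = i then eval x (pderiv j f) else 0 := by
      intro j
      rw [C_mul_X_eq_monomial, coeff_monomial]
      by_cases h : j = i
      · subst h; simp
      · rw [if_neg (fun he => h (Finsupp.single_left_injective one_ne_zero he)), if_neg h]
    rw [Finset.sum_congr rfl fun j _ => hcoeffj j,
      Finset.sum_ite_eq' Finset.univ i (fun j => eval x (pderiv j f))] at hc
    simpa using hc
  obtain ⟨e, rfl⟩ : ∃ e, d = e + 1 := ⟨d - 1, by omega⟩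
  have hpd0 : ∀ i, pderiv i f = 0 := fun i =>
    IH e (by omega) k' (pderiv i f) (isHomogeneous_pderiv hf i) (by omega) (hder i)
  set q := ringChar K with hqdef
  rcases CharP.char_is_prime_or_zero K q with hq | hq
  · -- positive characteristic q
    haveI : Fact q.Prime := ⟨hq⟩
    haveI hKq : CharP K q := hqdef ▸ ringChar.charP K
    haveI : CharP (MvPolynomial (Fin n) K) q := inferInstance
    have hdiv : ∀ γ ∈ f.support, ∀ i : Fin n, q ∣ γ i := by
      intro γ hγ i
      by_cases h0 : γ i = 0
      · simp [h0]
      have h6 := congrArg (coeff (γ - Finsupp.single i 1)) (hpd0 i)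
      rw [coeff_pderiv, coeff_zero] at h6
      have hre : (γ - Finsupp.single i 1) + Finsupp.single i 1 = γ :=
        tsub_add_cancel_of_le (by rwa [Finsupp.single_le_iff, Nat.one_le_iff_ne_zero])
      rw [hre] at h6
      have hidx : ((γ - Finsupp.single i 1 : Fin n →₀ ℕ)) i + 1 = γ i := by
        rw [Finsupp.tsub_apply, Finsupp.single_eq_same]
        omega
      rw [hidx] at h6
      rcases mul_eq_zero.1 h6 with h | h
      · exact absurd h (mem_support_iff.1 hγ)
      · exact (CharP.cast_eq_zero_iff K q (γ i)).1 h
    obtain ⟨γ0, hγ0⟩ := support_nonempty.2 hf0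
    have hdeg0 : γ0.degree = e + 1 := by
      by_contra h
      exact mem_support_iff.1 hγ0 (hf.coeff_eq_zero h)
    have hqd : q ∣ e + 1 := by
      rw [← hdeg0, Finsupp.degree_apply]
      exact Finset.dvd_sum (fun i _ => hdiv γ0 hγ0 i)
    choose rt hrt using fun c : K => IsAlgClosed.exists_pow_nat_eq c hq.pos
    classical
    set g : MvPolynomial (Fin n) K :=
      ∑ γ ∈ f.support, monomial (γ.mapRange (· / q) (by simp)) (rt (coeff γ f)) with hg
    have hgq : g ^ q = f := by
      rw [hg, sum_pow_char]
      calc (∑ γ ∈ f.support, (monomial (γ.mapRange (· / q) (by simp)) (rt (coeff γ f))) ^ q)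
          = ∑ γ ∈ f.support, monomial γ (coeff γ f) := by
            apply Finset.sum_congr rfl
            intro γ hγ
            rw [monomial_pow, hrt]
            have harg : q • Finsupp.mapRange (· / q) (by simp) γ = γ := by
              ext j
              rw [Finsupp.smul_apply, Finsupp.mapRange_apply, smul_eq_mul]
              exact Nat.mul_div_cancel' (hdiv γ hγ j)
            rw [harg]
        _ = f := (as_sum f).symm
    have hghom : g.IsHomogeneous ((e + 1) / q) := by
      intro δ hδ
      rw [hg, coeff_sum] at hδ
      obtain ⟨γ, hγ, hne⟩ := Finset.exists_ne_zero_of_sum_ne_zero hδ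
      rw [coeff_monomial] at hne
      have heq : γ.mapRange (· / q) (by simp) = δ := by
        by_contra h
        exact hne (if_neg h)
      have hdegγ : γ.degree = e + 1 := by
        by_contra h
        exact mem_support_iff.1 hγ (hf.coeff_eq_zero h)
      have hdegδ : q * δ.degree = e + 1 := by
        have hsub : (Finsupp.mapRange (· / q) (by simp) γ).support ⊆ γ.support :=
          Finsupp.support_mapRange
        calc q * δ.degree = ∑ i ∈ δ.support, q * δ i := by
              rw [Finsupp.degree_apply, Finset.mul_sum]
          _ = ∑ i ∈ γ.support, q * δ i := by
              apply Finset.sum_subset (heq ▸ hsub)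
              intro i _ hni
              rw [Finsupp.notMem_support_iff.1 hni, mul_zero]
          _ = ∑ i ∈ γ.support, γ i := by
              apply Finset.sum_congr rfl
              intro i _
              rw [← heq, Finsupp.mapRange_apply]
              exact Nat.mul_div_cancel' (hdiv γ hγ i)
          _ = e + 1 := by rw [← Finsupp.degree_apply]; exact hdegγ
      rw [show (Finsupp.weight 1 : (Fin n →₀ ℕ) →+ ℕ) = Finsupp.degree from (Finsupp.degree_eq_weight_one).symm]
      exact (Nat.div_eq_of_eq_mul_left hq.pos (by rw [← hdegδ, mul_comm])).symm
    have hgvan : ∀ x ∈ SumPts I (k' + 1), eval x g = 0 := by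
      intro x hx
      have h7 := hvan x hx
      rw [← hgq, map_pow] at h7
      exact pow_eq_zero_iff hq.ne_zero |>.1 h7
    have hgzero := IH ((e + 1) / q) (Nat.div_lt_self (by omega) hq.one_lt) (k' + 1) g hghom
      (le_trans (Nat.div_le_self (e + 1) q) hdk) hgvan
    apply hf0
    rw [← hgq, hgzero, zero_pow hq.ne_zero]
  · -- characteristic zero
    haveI : CharP K 0 := by
      have h8 := ringChar.charP K
      rwa [← hqdef, hq] at h8
    haveI : CharZero K := CharP.charP_to_charZero K
    apply hf0
    ext γ
    rw [coeff_zero]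
    by_contra hc
    have hγ : γ ∈ f.support := mem_support_iff.2 hc
    have hdegγ : γ.degree = e + 1 := by
      by_contra h
      exact mem_support_iff.1 hγ (hf.coeff_eq_zero h)
    have hex : ∃ i, γ i ≠ 0 := by
      by_contra h
      push_neg at h
      have : γ = 0 := Finsupp.ext h
      rw [this] at hdegγ
      simp at hdegγ
    obtain ⟨i, hi⟩ := hex
    have h6 := congrArg (coeff (γ - Finsupp.single i 1)) (hpd0 i)
    rw [coeff_pderiv, coeff_zero] at h6
    have hre : (γ - Finsupp.single i 1) + Finsupp.single i 1 = γ :=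
      tsub_add_cancel_of_le (by rwa [Finsupp.single_le_iff, Nat.one_le_iff_ne_zero])
    rw [hre] at h6
    rcases mul_eq_zero.1 h6 with h | h
    · exact hc h
    · exact absurd h (Nat.cast_ne_zero.2 (by omega))

/-- The `k`-th secant ideal of a homogeneous radical ideal inside `m^2`
is contained in `m^(k+2)`. -/
lemma secant_le_irr_pow [IsAlgClosed K] {I : Ideal (MvPolynomial (Fin n) K)}
    (hhom : IsHomogeneousIdeal I) (hrad : I.IsRadical) (hm2 : I ≤ irrelevant K n ^ 2)
    (k : ℕ) : secantIdeal I k ≤ irrelevant K n ^ (k + 2) := by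
  intro f hf
  have hvan : ∀ x ∈ SumPts I k, eval x f = 0 := fun x hx =>
    sumPts_subset_zeroSet_secant I k hx f hf
  have hcomp : ∀ d, ∀ x ∈ SumPts I k, eval x (homogeneousComponent d f) = 0 := by
    intro d x hx
    rcases le_or_gt d f.totalDegree with hd | hd
    swap
    · rw [homogeneousComponent_eq_zero _ _ hd]
      simp
    · classical
      set Q : Polynomial K := ∑ e ∈ Finset.range (f.totalDegree + 1),
        Polynomial.C (eval x (homogeneousComponent e f)) * Polynomial.X ^ e with hQ
      have hQeval : ∀ t : K, Q.eval t = 0 := by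
        intro t
        rw [hQ, Polynomial.eval_finset_sum]
        have h2 : eval (t • x) f = 0 := hvan _ (smul_mem_sumPts hhom k x hx t)
        rw [← h2]
        conv_rhs => rw [← sum_homogeneousComponent f]
        rw [map_sum]
        apply Finset.sum_congr rfl
        intro e _
        rw [eval_smul_of_isHomogeneous (homogeneousComponent_isHomogeneous e f)]
        simp
        ring
      have hQ0 : Q = 0 := Polynomial.funext (fun t => by
        rw [hQeval t, Polynomial.eval_zero])
      have h3 := congrArg (fun P => Polynomial.coeff P d) hQ0
      simp only [Polynomial.coeff_zero] at h3
      rw [hQ, Polynomial.finset_sum_coeff] at h3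
      have hco : ∑ e ∈ Finset.range (f.totalDegree + 1),
          (Polynomial.C (eval x (homogeneousComponent e f)) * Polynomial.X ^ e).coeff d =
          eval x (homogeneousComponent d f) := by
        rw [Finset.sum_eq_single d]
        · rw [Polynomial.coeff_C_mul, Polynomial.coeff_X_pow, if_pos rfl, mul_one]
        · intro e _ hne
          rw [Polynomial.coeff_C_mul, Polynomial.coeff_X_pow, if_neg (Ne.symm hne), mul_zero]
        · intro hnotin
          exact absurd (Finset.mem_range.2 (by omega)) hnotin
      rw [hco] at h3
      exact h3
  apply mem_irr_pow_of_support
  intro γ hγ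
  by_contra hlt
  push_neg at hlt
  have hzero : homogeneousComponent γ.degree f = 0 :=
    homog_vanish_eq_zero hhom hrad hm2 γ.degree k _
      (homogeneousComponent_isHomogeneous _ f) (by omega) (hcomp γ.degree)
  have h4 := congrArg (coeff γ) hzero
  rw [coeff_homogeneousComponent, if_pos rfl, coeff_zero] at h4
  exact mem_support_iff.1 hγ h4

/-- Key iterated-translation lemma: translating an element of the `(r+s)`-th secant ideal
by a sum of `r+1` points of `V(I)` lands in `m^(s+1)`. -/
lemma T_mem_irr_pow [IsAlgClosed K] {I : Ideal (MvPolynomial (Fin n) K)}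
    (hhom : IsHomogeneousIdeal I) (hrad : I.IsRadical) (hm2 : I ≤ irrelevant K n ^ 2)
    (r s : ℕ) : ∀ f ∈ secantIdeal I (r + s), ∀ q ∈ SumPts I r,
      T q f ∈ irrelevant K n ^ (s + 1) := by
  induction r with
  | zero =>
      intro f hf q hq
      rw [Nat.zero_add] at hf
      cases s with
      | zero =>
          apply mem_irr_pow_of_support
          intro γ hγ
          rw [Nat.one_le_iff_ne_zero, Ne, Finsupp.degree_eq_zero_iff]
          rintro rfl
          have h0 : coeff 0 (T q f) = 0 := by
            rw [← eval_zero', eval_T, zero_add]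
            exact hq f hf
          exact mem_support_iff.1 hγ h0
      | succ s' =>
          have h1 : T q f ∈ secantIdeal I s' :=
            T_mem_of_mem_join (fun g hg => hq g hg) hf
          exact secant_le_irr_pow hhom hrad hm2 s' h1
  | succ r ih =>
      intro f hf q hq
      obtain ⟨a, ha, b, hb, rfl⟩ := hq
      have hf' : f ∈ joinIdeal I (secantIdeal I (r + s)) := by
        rw [show r + 1 + s = (r + s) + 1 from by omega] at hf
        exact hf
      have h1 : T a f ∈ secantIdeal I (r + s) :=
        T_mem_of_mem_join (fun g hg => ha g hg) hf'
      have h2 := ih (T a f) h1 b hb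
      rwa [T_comp_T, add_comm b a] at h2

/-- The coefficient of `γ` in `f(X + p)`, as a polynomial function of `p`. -/
noncomputable def coeffPoly (f : MvPolynomial (Fin n) K) (γ : Fin n →₀ ℕ) :
    MvPolynomial (Fin n) K :=
  coeff γ (aeval (fun i =>
    (C (X i) + X i : MvPolynomial (Fin n) (MvPolynomial (Fin n) K))) f)

lemma eval_coeffPoly (p : Fin n → K) (f : MvPolynomial (Fin n) K) (γ : Fin n →₀ ℕ) :
    eval p (coeffPoly f γ) = coeff γ (T p f) := by
  rw [coeffPoly, ← coeff_map]
  congr 1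
  have h : (MvPolynomial.map (eval p : MvPolynomial (Fin n) K →+* K)).comp
      ((aeval (fun i =>
        (C (X i) + X i : MvPolynomial (Fin n) (MvPolynomial (Fin n) K))) :
        MvPolynomial (Fin n) K →ₐ[K] MvPolynomial (Fin n) (MvPolynomial (Fin n) K)) :
        MvPolynomial (Fin n) K →+* MvPolynomial (Fin n) (MvPolynomial (Fin n) K)) =
      ((T p : MvPolynomial (Fin n) K →ₐ[K] MvPolynomial (Fin n) K) :
        MvPolynomial (Fin n) K →+* MvPolynomial (Fin n) K) := by
    apply MvPolynomial.ringHom_ext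
    · intro c
      simp [T, algebraMap_eq]
    · intro i
      simp [T]
      rw [add_comm]
  exact DFunLike.congr_fun h f

end SecantAux

/-- for a homogeneous radical ideal contained in `m^2`,
`I^{{r+s-1}} ⊆ (I^{{r}})^{(s)}` for all `r, s ≥ 1`.  Here `secantIdeal I r`
denotes the `(r+1)`-st secant ideal, so the statement below is the claim
for the secant indices `r+1` and `s+1`. -/
theorem secant_le_symbolicPower_secant {K : Type*} [Field K] [IsAlgClosed K] {n : ℕ}
    (I : Ideal (MvPolynomial (Fin n) K)) (hhom : IsHomogeneousIdeal I)
    (hrad : I.IsRadical) (hm2 : I ≤ irrelevant K n ^ 2) (r s : ℕ) :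
    secantIdeal I (r + s) ≤ pointsSymbolicPower (secantIdeal I r) (s + 1) := by
  intro f hf
  rw [pointsSymbolicPower, Ideal.mem_iInf]
  intro p
  rw [Ideal.mem_iInf]
  intro hp
  have hTp : SecantAux.T p f ∈ irrelevant K n ^ (s + 1) := by
    apply SecantAux.mem_irr_pow_of_support
    intro γ hγ
    by_contra hlt
    push_neg at hlt
    have hvan : ∀ x ∈ SecantAux.SumPts I r, eval x (SecantAux.coeffPoly f γ) = 0 := by
      intro x hx
      rw [SecantAux.eval_coeffPoly]
      exact SecantAux.coeff_eq_zero_of_mem_irr_pow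
        (SecantAux.T_mem_irr_pow hhom hrad hm2 r s f hf x hx) (by omega)
    have h0 := SecantAux.eval_eq_zero_on_zeroSet_secant I r _ hvan p hp
    rw [SecantAux.eval_coeffPoly] at h0
    exact MvPolynomial.mem_support_iff.1 hγ h0
  have hpt : pointIdeal p ^ (s + 1) =
      Ideal.map (SecantAux.T (-p)).toRingHom (irrelevant K n ^ (s + 1)) := by
    rw [Ideal.map_pow]
    congr 1
    rw [irrelevant, Ideal.map_span, pointIdeal]
    congr 1
    ext g
    simp only [Set.mem_image, Set.mem_range, Set.mem_setOf_eq]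
    constructor
    · rintro ⟨i, rfl⟩
      refine ⟨X i, ⟨i, rfl⟩, ?_⟩
      show (SecantAux.T (-p)) (X i) = X i - C (p i)
      rw [SecantAux.T_X]
      simp [sub_eq_add_neg]
    · rintro ⟨x, ⟨i, rfl⟩, rfl⟩
      refine ⟨i, ?_⟩
      show (SecantAux.T (-p)).toRingHom (X i) = X i - C (p i)
      show (SecantAux.T (-p)) (X i) = X i - C (p i)
      rw [SecantAux.T_X]
      simp [sub_eq_add_neg]
  rw [hpt]
  have hmap := Ideal.mem_map_of_mem (SecantAux.T (-p)).toRingHom hTp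
  rwa [show (SecantAux.T (-p)).toRingHom (SecantAux.T p f) = f from SecantAux.T_neg_T p f]
    at hmap
end

section
/- For any finite simple graph G, the second symbolic power of the edge ideal satisfies I(G)^{(2)} = I(G)^{{2}} + I(G)^2; concretely, I(G)^{(2)} is generated by the cubics x_i x_j x_k over triangles {i,j,k} of G together with the quartics x_i x_j x_k x_l where {i,j} and {k,l} are edges of G. -/
open MvPolynomial


/-- The complement of the union of the minimal primes of `I`, as a submonoid. -/
def symbCompl {R : Type*} [CommRing R] (I : Ideal R) : Submonoid R where
  carrier := {s | ∀ p ∈ I.minimalPrimes, s ∉ p}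
  one_mem' := by
    intro p hp h1
    exact hp.1.1.ne_top ((Ideal.eq_top_iff_one p).mpr h1)
  mul_mem' := by
    intro a b ha hb p hp hab
    rcases hp.1.1.mem_or_mem hab with h | h
    · exact ha p hp h
    · exact hb p hp h

/-- The `r`-th symbolic power of `I`. -/
noncomputable def symbolicPower {R : Type*} [CommRing R] (I : Ideal R) (r : ℕ) : Ideal R :=
  Ideal.comap (algebraMap R (Localization (symbCompl I)))
    (Ideal.map (algebraMap R (Localization (symbCompl I))) (I ^ r))

/-- The edge ideal of a simple graph. -/
noncomputable def graphEdgeIdeal (K : Type*) [Field K] {n : ℕ} (G : SimpleGraph (Fin n)) :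
    Ideal (MvPolynomial (Fin n) K) :=
  Ideal.span {m | ∃ i j : Fin n, G.Adj i j ∧ m = X i * X j}

namespace SymbAux

open Finsupp Finset Pointwise

variable {K : Type*} [Field K] {n : ℕ}

/-- weight of an exponent vector on a vertex set -/
def wt (C : Finset (Fin n)) (μ : Fin n →₀ ℕ) : ℕ := ∑ c ∈ C, μ c

lemma wt_add (C : Finset (Fin n)) (a b : Fin n →₀ ℕ) : wt C (a + b) = wt C a + wt C b := by
  simp [wt, Finsupp.add_apply, Finset.sum_add_distrib]

lemma wt_single (C : Finset (Fin n)) (i : Fin n) :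
    wt C (Finsupp.single i 1) = if i ∈ C then 1 else 0 := by
  simp [wt, Finsupp.single_apply]

lemma wt_mono {C C' : Finset (Fin n)} (h : C' ⊆ C) (μ : Fin n →₀ ℕ) : wt C' μ ≤ wt C μ :=
  Finset.sum_le_sum_of_subset h

lemma le_wt {C : Finset (Fin n)} {μ : Fin n →₀ ℕ} {c : Fin n} (hc : c ∈ C) : μ c ≤ wt C μ :=
  Finset.single_le_sum (fun _ _ => Nat.zero_le _) hc

lemma pair_le {μ : Fin n →₀ ℕ} {c c' : Fin n} (h : c ≠ c') (h1 : 1 ≤ μ c) (h2 : 1 ≤ μ c') :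
    Finsupp.single c 1 + Finsupp.single c' 1 ≤ μ := by
  rw [Finsupp.le_def]
  intro v
  rw [Finsupp.add_apply]
  rcases eq_or_ne c v with rfl | h1v
  · rw [Finsupp.single_eq_same, Finsupp.single_eq_of_ne' (Ne.symm h)]
    omega
  · rw [Finsupp.single_eq_of_ne' h1v, zero_add]
    rcases eq_or_ne c' v with rfl | h2v
    · rw [Finsupp.single_eq_same]; omega
    · rw [Finsupp.single_eq_of_ne' h2v]; omega

lemma one_le_wt_iff {C : Finset (Fin n)} {μ : Fin n →₀ ℕ} :
    1 ≤ wt C μ ↔ ∃ c ∈ C, Finsupp.single c 1 ≤ μ := by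
  constructor
  · intro h
    by_contra hc; push_neg at hc
    have h0 : ∀ c ∈ C, μ c = 0 := by
      intro c hcC
      by_contra h0
      exact hc c hcC (Finsupp.single_le_iff.mpr (Nat.one_le_iff_ne_zero.mpr h0))
    have : wt C μ = 0 := Finset.sum_eq_zero h0
    omega
  · rintro ⟨c, hcC, hle⟩
    calc 1 ≤ μ c := Finsupp.single_le_iff.mp hle
    _ ≤ wt C μ := le_wt hcC

lemma two_le_wt_iff {C : Finset (Fin n)} {μ : Fin n →₀ ℕ} :
    2 ≤ wt C μ ↔ ∃ c ∈ C, ∃ c' ∈ C, Finsupp.single c 1 + Finsupp.single c' 1 ≤ μ := by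
  classical
  constructor
  · intro h
    by_cases h2 : ∃ c ∈ C, 2 ≤ μ c
    · obtain ⟨c, hcC, hc⟩ := h2
      refine ⟨c, hcC, c, hcC, ?_⟩
      rw [show (1 : ℕ) = 1 from rfl, ← Finsupp.single_add]
      exact Finsupp.single_le_iff.mpr hc
    · push_neg at h2
      set C' := C.filter (fun c => μ c ≠ 0) with hC'
      have hsum : wt C μ = ∑ c ∈ C', μ c := (Finset.sum_filter_ne_zero C).symm
      have hcard : 2 ≤ C'.card := by
        have hle : ∑ c ∈ C', μ c ≤ C'.card * 1 := by
          apply Finset.sum_le_card_nsmul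
          intro x hx
          exact Nat.lt_succ_iff.mp (h2 x (Finset.mem_of_mem_filter x hx))
        omega
      obtain ⟨c, hc, c', hc', hne⟩ := Finset.one_lt_card.mp hcard
      have hc1 : 1 ≤ μ c := Nat.one_le_iff_ne_zero.mpr (Finset.mem_filter.mp hc).2
      have hc'1 : 1 ≤ μ c' := Nat.one_le_iff_ne_zero.mpr (Finset.mem_filter.mp hc').2
      exact ⟨c, Finset.mem_of_mem_filter c hc, c', Finset.mem_of_mem_filter c' hc',
        pair_le hne hc1 hc'1⟩
  · rintro ⟨c, hcC, c', hc'C, hle⟩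
    rcases eq_or_ne c c' with rfl | hne
    · rw [← Finsupp.single_add] at hle
      have : 2 ≤ μ c := by simpa using Finsupp.single_le_iff.mp hle
      calc 2 ≤ μ c := this
      _ ≤ wt C μ := le_wt hcC
    · have h1 : 1 ≤ μ c := by
        have h' := (Finsupp.le_def.mp hle) c
        rw [Finsupp.add_apply, Finsupp.single_eq_same, Finsupp.single_eq_of_ne' (Ne.symm hne)] at h'
        omega
      have h2 : 1 ≤ μ c' := by
        have h' := (Finsupp.le_def.mp hle) c'
        rw [Finsupp.add_apply, Finsupp.single_eq_same, Finsupp.single_eq_of_ne' hne] at h'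
        omega
      have hsub : {c, c'} ⊆ C := by
        intro x hx
        simp only [Finset.mem_insert, Finset.mem_singleton] at hx
        rcases hx with rfl | rfl <;> assumption
      have : μ c + μ c' ≤ wt C μ := by
        rw [← Finset.sum_pair hne]
        exact Finset.sum_le_sum_of_subset hsub
      omega

lemma key (C : Finset (Fin n)) {s x : MvPolynomial (Fin n) K} {p q : ℕ}
    (hs : ∃ ν ∈ s.support, wt C ν < p) (hx : ∃ μ ∈ x.support, wt C μ < q) :
    ∃ γ ∈ (s * x).support, wt C γ + 1 < p + q := by
  classical
  obtain ⟨ν₀, hν₀, hν₀p⟩ := hs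
  obtain ⟨μ₀, hμ₀, hμ₀q⟩ := hx
  obtain ⟨ν₁, hν₁, hν₁min⟩ := Finset.exists_min_image s.support (wt C) ⟨ν₀, hν₀⟩
  obtain ⟨μ₁, hμ₁, hμ₁min⟩ := Finset.exists_min_image x.support (wt C) ⟨μ₀, hμ₀⟩
  set ds := wt C ν₁ with hds
  set dx := wt C μ₁ with hdx
  obtain ⟨ν, hν, hνmax⟩ := Finset.exists_max_image
    (s.support.filter (fun a => wt C a = ds)) toLex ⟨ν₁, by simp [hν₁, hds]⟩
  obtain ⟨μ, hμ, hμmax⟩ := Finset.exists_max_image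
    (x.support.filter (fun a => wt C a = dx)) toLex ⟨μ₁, by simp [hμ₁, hdx]⟩
  rw [Finset.mem_filter] at hν hμ
  have hcoeff : (s * x).coeff (ν + μ) = s.coeff ν * x.coeff μ := by
    rw [MvPolynomial.coeff_mul]
    apply Finset.sum_eq_single_of_mem (ν, μ) (Finset.HasAntidiagonal.mem_antidiagonal.mpr rfl)
    rintro ⟨a, b⟩ hab hne
    rw [Finset.HasAntidiagonal.mem_antidiagonal] at hab
    by_contra h0
    have has : a ∈ s.support := MvPolynomial.mem_support_iff.mpr (left_ne_zero_of_mul h0)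
    have hbx : b ∈ x.support := MvPolynomial.mem_support_iff.mpr (right_ne_zero_of_mul h0)
    have hw : wt C a + wt C b = ds + dx := by rw [← wt_add, hab, wt_add, hν.2, hμ.2]
    have hads : ds ≤ wt C a := hν₁min a has
    have hbdx : dx ≤ wt C b := hμ₁min b hbx
    have ha' : wt C a = ds := by omega
    have hb' : wt C b = dx := by omega
    have hale : toLex a ≤ toLex ν := hνmax a (Finset.mem_filter.mpr ⟨has, ha'⟩)
    have hble : toLex b ≤ toLex μ := hμmax b (Finset.mem_filter.mpr ⟨hbx, hb'⟩)
    rcases lt_or_eq_of_le hale with hlt | heq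
    · have hcontra : toLex (a + b) < toLex (ν + μ) := by
        rw [toLex_add, toLex_add]
        exact add_lt_add_of_lt_of_le hlt hble
      rw [hab] at hcontra
      exact lt_irrefl _ hcontra
    · have ha : a = ν := toLex.injective heq
      subst ha
      have hb : b = μ := add_left_cancel hab
      exact hne (Prod.ext rfl hb)
  refine ⟨ν + μ, ?_, ?_⟩
  · rw [MvPolynomial.mem_support_iff, hcoeff]
    exact mul_ne_zero (MvPolynomial.mem_support_iff.mp hν.1) (MvPolynomial.mem_support_iff.mp hμ.1)
  · rw [wt_add, hν.2, hμ.2]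
    have h1 := hν₁min ν₀ hν₀
    have h2 := hμ₁min μ₀ hμ₀
    omega

/-- `P_C`: the prime generated by the variables in `C`. -/
noncomputable def Pc (K : Type*) [Field K] {n : ℕ} (C : Finset (Fin n)) :
    Ideal (MvPolynomial (Fin n) K) :=
  Ideal.span ((fun s => monomial s (1 : K)) '' {σ | ∃ c ∈ C, σ = Finsupp.single c 1})

lemma mem_Pc {C : Finset (Fin n)} {f : MvPolynomial (Fin n) K} :
    f ∈ Pc K C ↔ ∀ μ ∈ f.support, 1 ≤ wt C μ := by
  rw [Pc, mem_ideal_span_monomial_image]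
  refine forall₂_congr fun μ hμ => ?_
  rw [one_le_wt_iff]
  constructor
  · rintro ⟨σ, ⟨c, hc, rfl⟩, hle⟩; exact ⟨c, hc, hle⟩
  · rintro ⟨c, hc, hle⟩; exact ⟨_, ⟨c, hc, rfl⟩, hle⟩

lemma span_mono_mul (S T : Set (Fin n →₀ ℕ)) :
    Ideal.span ((fun s => monomial s (1 : K)) '' S) *
      Ideal.span ((fun s => monomial s (1 : K)) '' T) =
    Ideal.span ((fun s => monomial s (1 : K)) '' (S + T)) := by
  rw [Ideal.span_mul_span']
  congr 1
  ext f
  simp only [Set.mem_mul, Set.mem_image, Set.mem_add]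
  constructor
  · rintro ⟨a, ⟨σ, hσ, rfl⟩, b, ⟨τ, hτ, rfl⟩, rfl⟩
    exact ⟨σ + τ, ⟨σ, hσ, τ, hτ, rfl⟩, by rw [monomial_mul, one_mul]⟩
  · rintro ⟨γ, ⟨σ, hσ, τ, hτ, rfl⟩, rfl⟩
    exact ⟨monomial σ 1, ⟨σ, hσ, rfl⟩, monomial τ 1, ⟨τ, hτ, rfl⟩, by rw [monomial_mul, one_mul]⟩

lemma mem_Pc_sq {C : Finset (Fin n)} {f : MvPolynomial (Fin n) K} :
    f ∈ (Pc K C) ^ 2 ↔ ∀ μ ∈ f.support, 2 ≤ wt C μ := by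
  rw [pow_two, Pc, span_mono_mul, mem_ideal_span_monomial_image]
  refine forall₂_congr fun μ hμ => ?_
  rw [two_le_wt_iff]
  constructor
  · rintro ⟨σ, hσ, hle⟩
    rw [Set.mem_add] at hσ
    obtain ⟨τ1, h1, τ2, h2, rfl⟩ := hσ
    obtain ⟨c, hc, rfl⟩ := h1
    obtain ⟨c', hc', rfl⟩ := h2
    exact ⟨c, hc, c', hc', hle⟩
  · rintro ⟨c, hc, c', hc', hle⟩
    exact ⟨_, Set.mem_add.mpr ⟨_, ⟨c, hc, rfl⟩, _, ⟨c', hc', rfl⟩, rfl⟩, hle⟩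

lemma mul_not_mem_Pc {C : Finset (Fin n)} {s x : MvPolynomial (Fin n) K}
    (hs : s ∉ Pc K C) (hx : x ∉ Pc K C) : s * x ∉ Pc K C := by
  rw [mem_Pc] at hs hx
  push_neg at hs hx
  obtain ⟨ν, hν, hνw⟩ := hs
  obtain ⟨μ, hμ, hμw⟩ := hx
  obtain ⟨γ, hγ, hγw⟩ := key C ⟨ν, hν, hνw⟩ ⟨μ, hμ, hμw⟩
  rw [mem_Pc]
  push_neg
  exact ⟨γ, hγ, by omega⟩

lemma mul_not_mem_Pc_sq {C : Finset (Fin n)} {s x : MvPolynomial (Fin n) K}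
    (hs : s ∉ Pc K C) (hx : x ∉ (Pc K C) ^ 2) : s * x ∉ (Pc K C) ^ 2 := by
  rw [mem_Pc] at hs
  rw [mem_Pc_sq] at hx
  push_neg at hs hx
  obtain ⟨ν, hν, hνw⟩ := hs
  obtain ⟨μ, hμ, hμw⟩ := hx
  obtain ⟨γ, hγ, hγw⟩ := key C ⟨ν, hν, hνw⟩ ⟨μ, hμ, hμw⟩
  rw [mem_Pc_sq]
  push_neg
  exact ⟨γ, hγ, by omega⟩

lemma Pc_prime (C : Finset (Fin n)) : (Pc K C).IsPrime := by
  constructor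
  · intro htop
    have h1 : (1 : MvPolynomial (Fin n) K) ∈ Pc K C := htop ▸ Submodule.mem_top
    rw [mem_Pc] at h1
    have h0 : (0 : Fin n →₀ ℕ) ∈ (1 : MvPolynomial (Fin n) K).support := by
      rw [MvPolynomial.mem_support_iff]
      simp
    have := h1 0 h0
    simp [wt] at this
  · intro f g hfg
    by_contra hc
    push_neg at hc
    exact mul_not_mem_Pc hc.1 hc.2 hfg

lemma Pc_mono {C C' : Finset (Fin n)} (h : C' ⊆ C) : Pc K C' ≤ Pc K C := by
  apply Ideal.span_mono
  apply Set.image_mono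
  rintro σ ⟨c, hc, rfl⟩
  exact ⟨c, h hc, rfl⟩

lemma X_mem_Pc {C : Finset (Fin n)} {d : Fin n} :
    (X d : MvPolynomial (Fin n) K) ∈ Pc K C ↔ d ∈ C := by
  rw [mem_Pc]
  constructor
  · intro h
    have h' := h (Finsupp.single d 1) (by rw [support_X]; simp)
    rw [one_le_wt_iff] at h'
    obtain ⟨c, hcC, hle⟩ := h'
    have h1 := Finsupp.single_le_iff.mp hle
    rcases eq_or_ne d c with rfl | hdc
    · exact hcC
    · rw [Finsupp.single_eq_of_ne' hdc] at h1
      omega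
  · intro hd μ hμ
    rw [support_X] at hμ
    simp only [Finset.mem_singleton] at hμ
    subst hμ
    rw [one_le_wt_iff]
    exact ⟨d, hd, le_refl _⟩

section Graph

variable (G : SimpleGraph (Fin n))

/-- vertex cover -/
def IsCover (C : Finset (Fin n)) : Prop := ∀ u v, G.Adj u v → u ∈ C ∨ v ∈ C

/-- minimal vertex cover -/
def IsMinCover (C : Finset (Fin n)) : Prop :=
  IsCover G C ∧ ∀ C' ⊆ C, IsCover G C' → C' = C

lemma exists_minCover {C : Finset (Fin n)} (h : IsCover G C) :
    ∃ C' ⊆ C, IsMinCover G C' := by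
  classical
  obtain ⟨m, hm, hmin⟩ : ∃ m ∈ C.powerset.filter (fun D => IsCover G D),
      ∀ x ∈ C.powerset.filter (fun D => IsCover G D), ¬ x < m := by
    obtain ⟨m, hm⟩ := exists_minimal_of_wellFoundedLT
      (fun D => D ∈ C.powerset.filter (fun D => IsCover G D)) ⟨C, by simp [h]⟩
    exact ⟨m, hm.1, fun x hx hlt => hm.not_lt hx hlt⟩
  rw [Finset.mem_filter, Finset.mem_powerset] at hm
  refine ⟨m, hm.1, hm.2, fun C'' h'' hc'' => ?_⟩
  by_contra hne
  exact hmin C'' (by rw [Finset.mem_filter, Finset.mem_powerset]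
                     exact ⟨h''.trans hm.1, hc''⟩)
    (Finset.ssubset_iff_subset_ne.mpr ⟨h'', hne⟩)

lemma edgeIdeal_eq :
    graphEdgeIdeal K G = Ideal.span ((fun s => monomial s (1 : K)) ''
      {σ | ∃ i j, G.Adj i j ∧ σ = Finsupp.single i 1 + Finsupp.single j 1}) := by
  unfold graphEdgeIdeal
  congr 1
  ext f
  simp only [Set.mem_setOf_eq, Set.mem_image]
  constructor
  · rintro ⟨i, j, hij, rfl⟩
    exact ⟨_, ⟨i, j, hij, rfl⟩, by rw [show (X i : MvPolynomial (Fin n) K) = monomial (Finsupp.single i 1) 1 from rfl, show (X j : MvPolynomial (Fin n) K) = monomial (Finsupp.single j 1) 1 from rfl, monomial_mul, one_mul]⟩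
  · rintro ⟨σ, ⟨i, j, hij, rfl⟩, rfl⟩
    exact ⟨i, j, hij, by rw [show (X i : MvPolynomial (Fin n) K) = monomial (Finsupp.single i 1) 1 from rfl, show (X j : MvPolynomial (Fin n) K) = monomial (Finsupp.single j 1) 1 from rfl, monomial_mul, one_mul]⟩

lemma I_le_Pc {C : Finset (Fin n)} (h : IsCover G C) :
    graphEdgeIdeal K G ≤ Pc K C := by
  rw [edgeIdeal_eq (K := K) G, Ideal.span_le]
  rintro f ⟨σ, ⟨i, j, hij, rfl⟩, rfl⟩
  rw [SetLike.mem_coe, mem_Pc]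
  intro μ hμ
  classical
  rw [support_monomial] at hμ
  simp only [one_ne_zero, if_false, Finset.mem_singleton] at hμ
  subst hμ
  rw [one_le_wt_iff]
  rcases h i j hij with hiC | hjC
  · exact ⟨i, hiC, le_self_add⟩
  · exact ⟨j, hjC, le_add_self⟩

lemma exists_private {C : Finset (Fin n)} (h : IsMinCover G C) {c : Fin n} (hc : c ∈ C) :
    ∃ d, G.Adj c d ∧ d ∉ C := by
  have herase : ¬ IsCover G (C.erase c) := by
    intro hcov
    have h2 := h.2 _ (Finset.erase_subset _ _) hcov
    rw [← h2] at hc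
    exact Finset.notMem_erase c C hc
  rw [IsCover] at herase
  push_neg at herase
  obtain ⟨u, v, huv, hu, hv⟩ := herase
  rcases h.1 u v huv with huC | hvC
  · have hu' : u = c := by
      by_contra hne
      exact hu (Finset.mem_erase.mpr ⟨hne, huC⟩)
    subst hu'
    exact ⟨v, huv, fun hvC => hv (Finset.mem_erase.mpr ⟨huv.ne', hvC⟩)⟩
  · have hv' : v = c := by
      by_contra hne
      exact hv (Finset.mem_erase.mpr ⟨hne, hvC⟩)
    subst hv'
    exact ⟨u, huv.symm, fun huC' => hu (Finset.mem_erase.mpr ⟨huv.ne, huC'⟩)⟩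

lemma minCover_mem {C : Finset (Fin n)} (h : IsMinCover G C) :
    Pc K C ∈ (graphEdgeIdeal K G).minimalPrimes := by
  rw [Ideal.minimalPrimes, Set.mem_setOf_eq]
  constructor
  · exact ⟨Pc_prime C, I_le_Pc G h.1⟩
  · rintro q ⟨hq, hIq⟩ hqle
    rw [Pc, Ideal.span_le]
    rintro f ⟨σ, ⟨c, hcC, rfl⟩, rfl⟩
    obtain ⟨d, hcd, hdC⟩ := exists_private G h hcC
    have hXX : (X c : MvPolynomial (Fin n) K) * X d ∈ q :=
      hIq (Ideal.subset_span ⟨c, d, hcd, rfl⟩)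
    rcases hq.mem_or_mem hXX with h1 | h2
    · exact h1
    · exact absurd (X_mem_Pc.mp (hqle h2)) hdC

lemma classify {p : Ideal (MvPolynomial (Fin n) K)}
    (hp : p ∈ (graphEdgeIdeal K G).minimalPrimes) :
    ∃ C, IsMinCover G C ∧ p = Pc K C := by
  classical
  rw [Ideal.minimalPrimes, Set.mem_setOf_eq] at hp
  obtain ⟨⟨hprime, hIp⟩, hmin⟩ := hp
  set C := Finset.univ.filter (fun c => (X c : MvPolynomial (Fin n) K) ∈ p) with hC
  have hXc : ∀ c, c ∈ C ↔ (X c : MvPolynomial (Fin n) K) ∈ p := by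
    intro c; simp [hC]
  have hcov : IsCover G C := by
    intro u v huv
    have hm : (X u : MvPolynomial (Fin n) K) * X v ∈ p :=
      hIp (Ideal.subset_span ⟨u, v, huv, rfl⟩)
    rcases hprime.mem_or_mem hm with h | h
    · exact Or.inl ((hXc u).mpr h)
    · exact Or.inr ((hXc v).mpr h)
  have hPCp : Pc K C ≤ p := by
    rw [Pc, Ideal.span_le]
    rintro f ⟨σ, ⟨c, hcC, rfl⟩, rfl⟩
    exact (hXc c).mp hcC
  have hpPC : p ≤ Pc K C := hmin ⟨Pc_prime C, I_le_Pc G hcov⟩ hPCp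
  have heq : p = Pc K C := le_antisymm hpPC hPCp
  refine ⟨C, ⟨hcov, ?_⟩, heq⟩
  intro C' hC'sub hC'cov
  have h1 : Pc K C' ≤ p := le_trans (Pc_mono hC'sub) hPCp
  have h2 : p ≤ Pc K C' := hmin ⟨Pc_prime C', I_le_Pc G hC'cov⟩ h1
  apply Finset.Subset.antisymm hC'sub
  intro c hcC
  exact X_mem_Pc.mp (h2 ((hXc c).mp hcC))

/-- triangle / double-edge exponent vectors -/
def TS (G : SimpleGraph (Fin n)) : Set (Fin n →₀ ℕ) :=
  {σ | (∃ i j k, G.Adj i j ∧ G.Adj i k ∧ G.Adj j k ∧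
          σ = Finsupp.single i 1 + Finsupp.single j 1 + Finsupp.single k 1) ∨
       (∃ i j k l, G.Adj i j ∧ G.Adj k l ∧
          σ = Finsupp.single i 1 + Finsupp.single j 1 + Finsupp.single k 1 + Finsupp.single l 1)}

lemma comb (μ : Fin n →₀ ℕ)
    (H : ∀ C : Finset (Fin n), IsCover G C → 2 ≤ wt C μ) :
    ∃ σ ∈ TS G, σ ≤ μ := by
  classical
  -- Step 1 : an edge inside the support of μ
  have h1 : ∃ i j, G.Adj i j ∧ 1 ≤ μ i ∧ 1 ≤ μ j := by
    by_contra hno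
    push_neg at hno
    have hcov : IsCover G (Finset.univ.filter (fun v => μ v = 0)) := by
      intro u v huv
      by_cases hu : μ u = 0
      · left; simp [hu]
      · right
        have := hno u v huv (Nat.one_le_iff_ne_zero.mpr hu)
        simp only [Finset.mem_filter, Finset.mem_univ, true_and]
        omega
    have h2 := H _ hcov
    have h0 : wt (Finset.univ.filter (fun v => μ v = 0)) μ = 0 :=
      Finset.sum_eq_zero (fun v hv => (Finset.mem_filter.mp hv).2)
    omega
  obtain ⟨i, j, hij, hi, hj⟩ := h1
  have hne : i ≠ j := hij.ne
  set b : Fin n →₀ ℕ := μ - (Finsupp.single i 1 + Finsupp.single j 1) with hbdef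
  have hbv : ∀ v, b v = μ v - ((if i = v then 1 else 0) + (if j = v then 1 else 0)) := by
    intro v
    rw [hbdef, Finsupp.tsub_apply, Finsupp.add_apply, Finsupp.single_apply, Finsupp.single_apply]
  have hμeq : μ = Finsupp.single i 1 + Finsupp.single j 1 + b := by
    ext v
    rw [Finsupp.add_apply, Finsupp.add_apply, Finsupp.single_apply, Finsupp.single_apply, hbv v]
    rcases eq_or_ne i v with rfl | hvi
    · rw [if_pos rfl, if_neg (Ne.symm hne)]
      omega
    · rcases eq_or_ne j v with rfl | hvj
      · rw [if_neg hvi, if_pos rfl]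
        omega
      · rw [if_neg hvi, if_neg hvj]
        omega
  -- Case: two disjoint-ish edges
  by_cases hQ : ∃ k l, G.Adj k l ∧ 1 ≤ b k ∧ 1 ≤ b l
  · obtain ⟨k, l, hkl, hbk, hbl⟩ := hQ
    refine ⟨_, Or.inr ⟨i, j, k, l, hij, hkl, rfl⟩, ?_⟩
    have h1 : Finsupp.single k 1 + Finsupp.single l 1 ≤ b := pair_le hkl.ne hbk hbl
    calc Finsupp.single i 1 + Finsupp.single j 1 + Finsupp.single k 1 + Finsupp.single l 1
        = (Finsupp.single i 1 + Finsupp.single j 1) +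
            (Finsupp.single k 1 + Finsupp.single l 1) := by
          rw [add_assoc (Finsupp.single i 1 + Finsupp.single j 1)]
      _ ≤ (Finsupp.single i 1 + Finsupp.single j 1) + b := add_le_add_right h1 _
      _ = μ := hμeq.symm
  push_neg at hQ
  have hQ' : ∀ k l, G.Adj k l → b k = 0 ∨ b l = 0 := by
    intro k l hkl
    by_cases h0 : b k = 0
    · exact Or.inl h0
    · right
      have := hQ k l hkl (by omega)
      omega
  -- C0 : complement of the support of b
  set C0 := Finset.univ.filter (fun v => b v = 0) with hC0def
  have hC0cov : IsCover G C0 := by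
    intro u v huv
    rcases hQ' u v huv with h | h
    · left; simp [hC0def, h]
    · right; simp [hC0def, h]
  have hwtD : ∀ D : Finset (Fin n), D ⊆ C0 →
      wt D μ = (if i ∈ D then 1 else 0) + (if j ∈ D then 1 else 0) := by
    intro D hD
    have hb0 : wt D b = 0 := by
      apply Finset.sum_eq_zero
      intro v hv
      have := hD hv
      simp only [hC0def, Finset.mem_filter, Finset.mem_univ, true_and] at this
      exact this
    rw [hμeq, wt_add, wt_add, wt_single, wt_single, hb0, add_zero]
  have h2 := H C0 hC0cov
  rw [hwtD C0 (Finset.Subset.refl C0)] at h2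
  have hiC0 : i ∈ C0 := by
    by_contra hc
    rw [if_neg hc] at h2
    split_ifs at h2 <;> omega
  have hjC0 : j ∈ C0 := by
    by_contra hc
    rw [if_neg hc] at h2
    split_ifs at h2 <;> omega
  have hbi : b i = 0 := by
    have := hiC0
    simp only [hC0def, Finset.mem_filter, Finset.mem_univ, true_and] at this
    exact this
  have hbj : b j = 0 := by
    have := hjC0
    simp only [hC0def, Finset.mem_filter, Finset.mem_univ, true_and] at this
    exact this
  -- triangle case
  by_cases htri : ∃ k, G.Adj i k ∧ 1 ≤ b k ∧ G.Adj j k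
  · obtain ⟨k, hik, hbk, hjk⟩ := htri
    refine ⟨_, Or.inl ⟨i, j, k, hij, hik, hjk, rfl⟩, ?_⟩
    rw [hμeq]
    exact add_le_add_right (Finsupp.single_le_iff.mpr hbk) _
  by_cases hquad : ∃ k l, G.Adj i k ∧ 1 ≤ b k ∧ G.Adj j l ∧
      Finsupp.single k 1 + Finsupp.single l 1 ≤ b
  · obtain ⟨k, l, hik, hbk, hjl, hklb⟩ := hquad
    refine ⟨_, Or.inr ⟨i, k, j, l, hik, hjl, rfl⟩, ?_⟩
    have hre : Finsupp.single i 1 + Finsupp.single k 1 + Finsupp.single j 1 +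
        Finsupp.single l 1 = (Finsupp.single i 1 + Finsupp.single j 1) +
          (Finsupp.single k 1 + Finsupp.single l 1) := by
      abel
    rw [hμeq, hre]
    exact add_le_add_right hklb _
  push_neg at htri hquad
  -- C1 : a cover forcing a neighbour of i inside the support of b
  set A := Finset.univ.filter (fun k => G.Adj i k ∧ b k ≠ 0) with hAdef
  have hC1cov : IsCover G ((C0.erase i) ∪ A) := by
    intro u v huv
    by_contra hc
    push_neg at hc
    obtain ⟨hu, hv⟩ := hc
    rw [Finset.mem_union, not_or] at hu hv
    obtain ⟨hu1, hu2⟩ := hu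
    obtain ⟨hv1, hv2⟩ := hv
    rcases hQ' u v huv with h | h
    · have huC0 : u ∈ C0 := by simp [hC0def, h]
      have hui : u = i := by
        by_contra hx
        exact hu1 (Finset.mem_erase.mpr ⟨hx, huC0⟩)
      subst hui
      by_cases hbv' : b v = 0
      · have hvC0 : v ∈ C0 := by simp [hC0def, hbv']
        exact hv1 (Finset.mem_erase.mpr ⟨huv.ne', hvC0⟩)
      · exact hv2 (by simp [hAdef, huv, hbv'])
    · have hvC0 : v ∈ C0 := by simp [hC0def, h]
      have hvi : v = i := by
        by_contra hx
        exact hv1 (Finset.mem_erase.mpr ⟨hx, hvC0⟩)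
      subst hvi
      by_cases hbu' : b u = 0
      · have huC0 : u ∈ C0 := by simp [hC0def, hbu']
        exact hu1 (Finset.mem_erase.mpr ⟨huv.ne, huC0⟩)
      · exact hu2 (by simp [hAdef, huv.symm, hbu'])
  have h3 := H _ hC1cov
  have hdisj : Disjoint (C0.erase i) A := by
    rw [Finset.disjoint_left]
    intro a ha ha'
    have h1 : b a = 0 := by
      have := (Finset.mem_erase.mp ha).2
      simp only [hC0def, Finset.mem_filter, Finset.mem_univ, true_and] at this
      exact this
    have h2' : b a ≠ 0 := by
      simp only [hAdef, Finset.mem_filter, Finset.mem_univ, true_and] at ha'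
      exact ha'.2
    exact h2' h1
  have hsplit : wt (C0.erase i ∪ A) μ = wt (C0.erase i) μ + wt A μ :=
    Finset.sum_union hdisj
  have h4 : wt (C0.erase i) μ = 1 := by
    rw [hwtD _ (Finset.erase_subset _ _),
      if_neg (fun hmem => (Finset.mem_erase.mp hmem).1 rfl),
      if_pos (Finset.mem_erase.mpr ⟨Ne.symm hne, hjC0⟩)]
  have hA : A.Nonempty := by
    by_contra hA
    rw [Finset.not_nonempty_iff_eq_empty] at hA
    rw [hsplit, h4, hA] at h3
    simp [wt] at h3
  obtain ⟨k, hk⟩ := hA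
  rw [hAdef, Finset.mem_filter] at hk
  obtain ⟨-, hik, hbk⟩ := hk
  -- j has no neighbour in the support of b
  have hB : ∀ l, G.Adj j l → b l = 0 := by
    intro l hjl
    by_contra hbl
    rcases eq_or_ne l k with rfl | hlk
    · exact htri l hik (by omega) hjl
    · exact hquad k l hik (by omega) hjl
        (pair_le (Ne.symm hlk) (by omega) (by omega))
  -- C2 : the contradiction cover
  have hC2cov : IsCover G (C0.erase j) := by
    intro u v huv
    by_contra hc
    push_neg at hc
    obtain ⟨hu, hv⟩ := hc
    rcases hQ' u v huv with h | h
    · have huC0 : u ∈ C0 := by simp [hC0def, h]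
      have huj : u = j := by
        by_contra hx
        exact hu (Finset.mem_erase.mpr ⟨hx, huC0⟩)
      subst huj
      have hbv' : b v = 0 := hB v huv
      exact hv (Finset.mem_erase.mpr ⟨huv.ne', by simp [hC0def, hbv']⟩)
    · have hvC0 : v ∈ C0 := by simp [hC0def, h]
      have hvj : v = j := by
        by_contra hx
        exact hv (Finset.mem_erase.mpr ⟨hx, hvC0⟩)
      subst hvj
      have hbu' : b u = 0 := hB u huv.symm
      exact hu (Finset.mem_erase.mpr ⟨huv.ne, by simp [hC0def, hbu']⟩)
  have h5 := H _ hC2cov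
  rw [hwtD _ (Finset.erase_subset _ _),
    if_pos (Finset.mem_erase.mpr ⟨hne, hiC0⟩),
    if_neg (fun hmem => (Finset.mem_erase.mp hmem).1 rfl)] at h5
  omega

end Graph

lemma mem_symbolicPower_iff {R : Type*} [CommRing R] (I : Ideal R) (r : ℕ) (x : R) :
    x ∈ symbolicPower I r ↔ ∃ s ∈ symbCompl I, s * x ∈ I ^ r := by
  rw [symbolicPower, Ideal.mem_comap,
    IsLocalization.mem_map_algebraMap_iff (symbCompl I) (Localization (symbCompl I))]
  constructor
  · rintro ⟨⟨⟨a, ha⟩, t⟩, h⟩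
    rw [← map_mul] at h
    obtain ⟨c, hc⟩ := (IsLocalization.eq_iff_exists (symbCompl I)
      (Localization (symbCompl I))).mp h
    refine ⟨(c : R) * (t : R), (symbCompl I).mul_mem c.2 t.2, ?_⟩
    have hre : (c : R) * (t : R) * x = (c : R) * (x * (t : R)) := by ring
    rw [hre, hc]
    exact Ideal.mul_mem_left _ _ ha
  · rintro ⟨s, hs, hsx⟩
    refine ⟨⟨⟨s * x, hsx⟩, ⟨s, hs⟩⟩, ?_⟩
    rw [← map_mul]
    exact congrArg _ (mul_comm x s)

lemma T_eq (G : SimpleGraph (Fin n)) :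
    {m : MvPolynomial (Fin n) K | (∃ i j k : Fin n, G.Adj i j ∧ G.Adj i k ∧ G.Adj j k ∧
          m = (X i : MvPolynomial (Fin n) K) * X j * X k) ∨
        (∃ i j k l : Fin n, G.Adj i j ∧ G.Adj k l ∧
          m = (X i : MvPolynomial (Fin n) K) * X j * X k * X l)} =
      (fun s => monomial s (1 : K)) '' TS G := by
  have h3 : ∀ i j k : Fin n, (X i : MvPolynomial (Fin n) K) * X j * X k =
      monomial (Finsupp.single i 1 + Finsupp.single j 1 + Finsupp.single k 1) 1 := by
    intro i j k
    rw [show (X i : MvPolynomial (Fin n) K) = monomial (Finsupp.single i 1) 1 from rfl,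
      show (X j : MvPolynomial (Fin n) K) = monomial (Finsupp.single j 1) 1 from rfl,
      show (X k : MvPolynomial (Fin n) K) = monomial (Finsupp.single k 1) 1 from rfl,
      monomial_mul, monomial_mul, one_mul, one_mul]
  have h4 : ∀ i j k l : Fin n, (X i : MvPolynomial (Fin n) K) * X j * X k * X l =
      monomial (Finsupp.single i 1 + Finsupp.single j 1 + Finsupp.single k 1 +
        Finsupp.single l 1) 1 := by
    intro i j k l
    rw [h3 i j k, show (X l : MvPolynomial (Fin n) K) = monomial (Finsupp.single l 1) 1 from rfl,
      monomial_mul, one_mul]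
  ext f
  simp only [Set.mem_setOf_eq, Set.mem_image, TS]
  constructor
  · rintro (⟨i, j, k, h1, h2, h5, rfl⟩ | ⟨i, j, k, l, h1, h2, rfl⟩)
    · exact ⟨_, Or.inl ⟨i, j, k, h1, h2, h5, rfl⟩, (h3 i j k).symm⟩
    · exact ⟨_, Or.inr ⟨i, j, k, l, h1, h2, rfl⟩, (h4 i j k l).symm⟩
  · rintro ⟨σ, (⟨i, j, k, h1, h2, h5, rfl⟩ | ⟨i, j, k, l, h1, h2, rfl⟩), rfl⟩
    · exact Or.inl ⟨i, j, k, h1, h2, h5, (h3 i j k).symm⟩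
    · exact Or.inr ⟨i, j, k, l, h1, h2, (h4 i j k l).symm⟩

end SymbAux

open SymbAux in
/-- the symbolic square of an edge ideal is generated by the cubics
coming from triangles and the quartics coming from pairs of edges. -/
theorem symbolicPower_two_edgeIdeal {K : Type*} [Field K] {n : ℕ}
    (G : SimpleGraph (Fin n)) :
    symbolicPower (graphEdgeIdeal K G) 2 =
      Ideal.span {m | (∃ i j k : Fin n, G.Adj i j ∧ G.Adj i k ∧ G.Adj j k ∧
          m = (X i : MvPolynomial (Fin n) K) * X j * X k) ∨
        (∃ i j k l : Fin n, G.Adj i j ∧ G.Adj k l ∧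
          m = (X i : MvPolynomial (Fin n) K) * X j * X k * X l)} := by
  classical
  apply le_antisymm
  · -- symbolic power ≤ span of triangles and edge pairs
    intro x hx
    rw [mem_symbolicPower_iff] at hx
    obtain ⟨s, hsM, hsx⟩ := hx
    rw [T_eq (K := K) G, mem_ideal_span_monomial_image]
    intro μ hμ
    have Hcov : ∀ C : Finset (Fin n), IsCover G C → 2 ≤ wt C μ := by
      intro C hC
      obtain ⟨C', hC'sub, hC'min⟩ := exists_minCover G hC
      have h1 : s ∉ Pc K C' := hsM _ (minCover_mem G hC'min)
      have h2 : s * x ∈ (Pc K C') ^ 2 :=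
        Ideal.pow_right_mono (I_le_Pc G hC'min.1) 2 hsx
      have h3 : x ∈ (Pc K C') ^ 2 := by
        by_contra h4
        exact mul_not_mem_Pc_sq h1 h4 h2
      exact le_trans ((mem_Pc_sq.mp h3) μ hμ) (wt_mono hC'sub μ)
    exact comb G μ Hcov
  · rw [Ideal.span_le]
    rintro m (⟨i, j, k, hij, hik, hjk, rfl⟩ | ⟨i, j, k, l, hij, hkl, rfl⟩)
    · -- triangle generator
      rw [SetLike.mem_coe, mem_symbolicPower_iff]
      have edge_mem : ∀ a b : Fin n, G.Adj a b →
          (X a : MvPolynomial (Fin n) K) * X b ∈ graphEdgeIdeal K G :=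
        fun a b h => Ideal.subset_span ⟨a, b, h, rfl⟩
      set m : MvPolynomial (Fin n) K := X i * X j * X k with hm
      set J := (graphEdgeIdeal K G ^ 2).colon (Ideal.span {m}) with hJ
      set CC : Finset (Finset (Fin n)) :=
        Finset.univ.filter (fun C => IsMinCover G C) with hCC
      have hnsub : ¬ ((J : Set (MvPolynomial (Fin n) K)) ⊆
          ⋃ C ∈ (↑CC : Set (Finset (Fin n))), ↑(Pc K C)) := by
        rw [Ideal.subset_union_prime ∅ ∅ (fun C _ _ _ => Pc_prime C)]
        rintro ⟨C, hCmem, hJC⟩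
        rw [hCC, Finset.mem_filter] at hCmem
        have hC := hCmem.2
        by_cases hiC : i ∈ C
        · by_cases hjC : j ∈ C
          · by_cases hkC : k ∈ C
            · obtain ⟨d, hid, hdC⟩ := exists_private G hC hiC
              have hXd : (X d : MvPolynomial (Fin n) K) ∈ J := by
                rw [hJ, Ideal.mem_colon_span_singleton]
                have hre : (X d : MvPolynomial (Fin n) K) * m =
                    (X i * X d) * (X j * X k) := by rw [hm]; ring
                rw [hre, pow_two]
                exact Ideal.mul_mem_mul (edge_mem _ _ hid) (edge_mem _ _ hjk)
              exact hdC (X_mem_Pc.mp (hJC hXd))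
            · have hXk : (X k : MvPolynomial (Fin n) K) ∈ J := by
                rw [hJ, Ideal.mem_colon_span_singleton]
                have hre : (X k : MvPolynomial (Fin n) K) * m =
                    (X i * X k) * (X j * X k) := by rw [hm]; ring
                rw [hre, pow_two]
                exact Ideal.mul_mem_mul (edge_mem _ _ hik) (edge_mem _ _ hjk)
              exact hkC (X_mem_Pc.mp (hJC hXk))
          · have hXj : (X j : MvPolynomial (Fin n) K) ∈ J := by
              rw [hJ, Ideal.mem_colon_span_singleton]
              have hre : (X j : MvPolynomial (Fin n) K) * m =
                  (X i * X j) * (X j * X k) := by rw [hm]; ring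
              rw [hre, pow_two]
              exact Ideal.mul_mem_mul (edge_mem _ _ hij) (edge_mem _ _ hjk)
            exact hjC (X_mem_Pc.mp (hJC hXj))
        · have hXi : (X i : MvPolynomial (Fin n) K) ∈ J := by
            rw [hJ, Ideal.mem_colon_span_singleton]
            have hre : (X i : MvPolynomial (Fin n) K) * m =
                (X i * X j) * (X i * X k) := by rw [hm]; ring
            rw [hre, pow_two]
            exact Ideal.mul_mem_mul (edge_mem _ _ hij) (edge_mem _ _ hik)
          exact hiC (X_mem_Pc.mp (hJC hXi))
      obtain ⟨s, hsJ, hsnot⟩ := Set.not_subset.mp hnsub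
      refine ⟨s, ?_, ?_⟩
      · intro p hp hsp
        obtain ⟨C, hCmin, rfl⟩ := classify G hp
        exact hsnot (Set.mem_biUnion
          (by rw [hCC]; simp only [Finset.coe_filter, Finset.mem_univ, true_and,
                Set.mem_setOf_eq]
              exact hCmin) hsp)
      · exact Ideal.mem_colon_span_singleton.mp hsJ
    · -- pair of edges generator
      rw [SetLike.mem_coe, mem_symbolicPower_iff]
      refine ⟨1, (symbCompl _).one_mem, ?_⟩
      rw [one_mul, pow_two]
      have hre : (X i : MvPolynomial (Fin n) K) * X j * X k * X l =
          (X i * X j) * (X k * X l) := by ring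
      rw [hre]
      exact Ideal.mul_mem_mul (Ideal.subset_span ⟨i, j, hij, rfl⟩)
        (Ideal.subset_span ⟨k, l, hkl, rfl⟩)
end

section
/- Let P be a finite poset and H_r(P) the hypergraph on the elements of P whose edges are the (r+1)-element antichains of P. Then the maximum cardinality of an independent set of H_r(P) equals c_r, the maximum cardinality of a union of r chains of P. -/
open Finset

section Dilworth
variable {P : Type*} [DecidableEq P] [PartialOrder P]

lemma inter_card_le_one' {C B : Finset P} (hC : IsChain (· ≤ ·) (C : Set P))
    (hB : IsAntichain (· ≤ ·) (B : Set P)) : (B ∩ C).card ≤ 1 := by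
  rw [Finset.card_le_one]
  intro x hx y hy
  simp only [Finset.mem_inter] at hx hy
  by_contra hne
  rcases hC hx.2 hy.2 (by exact_mod_cast hne) with h | h
  · exact hB hx.1 hy.1 hne h
  · exact hB hy.1 hx.1 (Ne.symm hne) h

lemma exists_transversal {k : ℕ} {C : Fin k → Finset P}
    (hC : ∀ i, IsChain (· ≤ ·) ((C i : Set P))) {B : Finset P}
    (hB : IsAntichain (· ≤ ·) (B : Set P)) (hk : B.card = k)
    (hcov : B ⊆ Finset.univ.biUnion C) :
    ∃ b : Fin k → P, Function.Injective b ∧ ∀ i, B ∩ C i = {b i} := by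
  have h1 : B ⊆ Finset.univ.biUnion (fun i => B ∩ C i) := by
    intro x hx
    obtain ⟨i, _, hi⟩ := Finset.mem_biUnion.1 (hcov hx)
    exact Finset.mem_biUnion.2 ⟨i, Finset.mem_univ i, Finset.mem_inter.2 ⟨hx, hi⟩⟩
  have hsum : k ≤ ∑ i : Fin k, (B ∩ C i).card := by
    calc k = B.card := hk.symm
      _ ≤ (Finset.univ.biUnion (fun i => B ∩ C i)).card := Finset.card_le_card h1
      _ ≤ ∑ i : Fin k, (B ∩ C i).card := Finset.card_biUnion_le
  have hone : ∀ i, (B ∩ C i).card = 1 := by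
    intro j
    have hle : (B ∩ C j).card ≤ 1 := inter_card_le_one' (hC j) hB
    have h2 : ∑ i ∈ Finset.univ.erase j, (B ∩ C i).card ≤ (k - 1) * 1 := by
      have := Finset.sum_le_card_nsmul (Finset.univ.erase j) (fun i => (B ∩ C i).card) 1
        (fun i _ => inter_card_le_one' (hC i) hB)
      simpa [Finset.card_erase_of_mem, smul_eq_mul] using this
    have h3 : ∑ i : Fin k, (B ∩ C i).card
        = (B ∩ C j).card + ∑ i ∈ Finset.univ.erase j, (B ∩ C i).card :=
      (Finset.add_sum_erase _ _ (Finset.mem_univ j)).symm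
    have hk1 : 1 ≤ k := by
      rcases Nat.eq_zero_or_pos k with h | h
      · exact absurd j.2 (by omega)
      · exact h
    omega
  have hex : ∀ i, ∃ x, B ∩ C i = {x} := fun i => Finset.card_eq_one.1 (hone i)
  choose b hb using hex
  have hbm : ∀ i, b i ∈ B := fun i => by
    have : b i ∈ B ∩ C i := by rw [hb i]; exact Finset.mem_singleton_self _
    exact (Finset.mem_inter.1 this).1
  have himg : Finset.univ.image b = B := by
    apply Finset.Subset.antisymm
    · intro x hx
      obtain ⟨i, _, rfl⟩ := Finset.mem_image.1 hx
      exact hbm i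
    · intro x hx
      obtain ⟨i, _, hi⟩ := Finset.mem_biUnion.1 (hcov hx)
      have : x ∈ B ∩ C i := Finset.mem_inter.2 ⟨hx, hi⟩
      rw [hb i, Finset.mem_singleton] at this
      exact Finset.mem_image.2 ⟨i, Finset.mem_univ i, this.symm⟩
  have hcard : (Finset.univ.image b).card = (Finset.univ : Finset (Fin k)).card := by
    rw [himg, hk, Finset.card_univ, Fintype.card_fin]
  have hinj : Set.InjOn b (Finset.univ : Finset (Fin k)) := Finset.card_image_iff.1 hcard
  refine ⟨b, fun i j hij => hinj (by simp) (by simp) hij, hb⟩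

/-- Dilworth's theorem, finitary version. -/
lemma dilworth : ∀ (n : ℕ) (T : Finset P) (k : ℕ), T.card ≤ n →
    (∀ A : Finset P, A ⊆ T → IsAntichain (· ≤ ·) (A : Set P) → A.card ≤ k) →
    ∃ C : Fin k → Finset P, (∀ i, IsChain (· ≤ ·) ((C i : Set P))) ∧ (∀ i, C i ⊆ T) ∧
      T ⊆ Finset.univ.biUnion C := by
  intro n
  induction n with
  | zero =>
    intro T k hT _
    have : T = ∅ := Finset.card_eq_zero.1 (Nat.le_zero.1 hT)
    subst this
    exact ⟨fun _ => ∅, fun i => by simp, fun i => by simp, by simp⟩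
  | succ n ih =>
    intro T k hT hw
    classical
    rcases T.eq_empty_or_nonempty with rfl | hne
    · exact ⟨fun _ => ∅, fun i => by simp, fun i => by simp, by simp⟩
    obtain ⟨a, haT, hamax⟩ := T.exists_maximal hne
    -- k ≠ 0
    have hk0 : k ≠ 0 := by
      intro hk0
      have h1 : ({a} : Finset P).card ≤ k := hw {a} (by simpa using haT)
        (by simp [IsAntichain])
      simp [hk0] at h1
    obtain ⟨m, rfl⟩ := Nat.exists_eq_succ_of_ne_zero hk0
    set T' := T.erase a with hT'def
    have hT'card : T'.card ≤ n := by
      rw [hT'def, Finset.card_erase_of_mem haT]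
      omega
    have hT'sub : T' ⊆ T := Finset.erase_subset _ _
    have hw' : ∀ A : Finset P, A ⊆ T' → IsAntichain (· ≤ ·) (A : Set P) → A.card ≤ m + 1 :=
      fun A hA hanti => hw A (hA.trans hT'sub) hanti
    by_cases hcase : ∃ B : Finset P, B ⊆ T' ∧ IsAntichain (· ≤ ·) (B : Set P) ∧ B.card = m + 1
    · -- hard case: T' has a maximum antichain of size k = m+1
      obtain ⟨C, hCchain, hCsub, hCcov⟩ := ih T' (m + 1) hT'card hw'
      obtain ⟨B₀, hB₀T, hB₀a, hB₀k⟩ := hcase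
      -- S i : elements of C i lying in some (m+1)-antichain of T'
      set S : Fin (m + 1) → Finset P := fun i => (C i).filter
        (fun x => ∃ B : Finset P, B ⊆ T' ∧ IsAntichain (· ≤ ·) (B : Set P) ∧
          B.card = m + 1 ∧ x ∈ B) with hSdef
      have hSne : ∀ i, (S i).Nonempty := by
        intro i
        obtain ⟨b, _, hb⟩ := exists_transversal hCchain hB₀a hB₀k (hB₀T.trans hCcov)
        have hbi : b i ∈ B₀ ∩ C i := by rw [hb i]; exact Finset.mem_singleton_self _
        rw [Finset.mem_inter] at hbi
        exact ⟨b i, Finset.mem_filter.2 ⟨hbi.2, B₀, hB₀T, hB₀a, hB₀k, hbi.1⟩⟩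
      have hach : ∀ i, ∃ x ∈ S i, ∀ y ∈ S i, ¬ x < y := fun i => by
        obtain ⟨x, hx, hmax⟩ := (S i).exists_maximal (hSne i)
        exact ⟨x, hx, fun y hy hlt => lt_irrefl _ (lt_of_lt_of_le hlt (hmax hy hlt.le))⟩
      choose aa haaS haamax using hach
      have haaC : ∀ i, aa i ∈ C i := fun i => (Finset.mem_filter.1 (haaS i)).1
      have haaT' : ∀ i, aa i ∈ T' := fun i => hCsub i (haaC i)
      have hle_aa : ∀ i x, x ∈ S i → x ≤ aa i := by
        intro i x hx
        by_cases hxe : x = aa i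
        · exact le_of_eq hxe
        · have hxC : x ∈ C i := (Finset.mem_filter.1 hx).1
          rcases hCchain i hxC (haaC i) hxe with h | h
          · exact h
          · exact absurd (lt_of_le_of_ne h (Ne.symm hxe)) (haamax i x hx)
      -- any transversal element of a max antichain lies below aa
      have htrans : ∀ (B : Finset P), B ⊆ T' → IsAntichain (· ≤ ·) (B : Set P) →
          B.card = m + 1 → ∃ b : Fin (m+1) → P, Function.Injective b ∧
          (∀ i, B ∩ C i = {b i}) ∧ (∀ i, b i ≤ aa i) ∧ (∀ i, b i ∈ B) := by
        intro B hBT hBa hBk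
        obtain ⟨b, hbinj, hb⟩ := exists_transversal hCchain hBa hBk (hBT.trans hCcov)
        have hbm : ∀ i, b i ∈ B ∩ C i := fun i => by
          rw [hb i]; exact Finset.mem_singleton_self _
        refine ⟨b, hbinj, hb, fun i => hle_aa i (b i) ?_, fun i => (Finset.mem_inter.1 (hbm i)).1⟩
        exact Finset.mem_filter.2 ⟨(Finset.mem_inter.1 (hbm i)).2, B, hBT, hBa, hBk,
          (Finset.mem_inter.1 (hbm i)).1⟩
      -- aa is injective
      have haainj : Function.Injective aa := by
        intro i j hij
        by_contra hne
        obtain ⟨B, hBT, hBa, hBk, hmem⟩ := (Finset.mem_filter.1 (haaS i)).2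
        obtain ⟨b, hbinj, hb, _, _⟩ := htrans B hBT hBa hBk
        have h1 : aa i ∈ B ∩ C i := Finset.mem_inter.2 ⟨hmem, haaC i⟩
        have h2 : aa i ∈ B ∩ C j := Finset.mem_inter.2 ⟨hmem, hij ▸ haaC j⟩
        rw [hb i, Finset.mem_singleton] at h1
        rw [hb j, Finset.mem_singleton] at h2
        exact hne (hbinj (h1.symm.trans h2))
      -- A := image of aa is an antichain of size m+1 in T'
      set A : Finset P := Finset.univ.image aa with hAdef
      have hAcard : A.card = m + 1 := by
        rw [hAdef, Finset.card_image_of_injective _ haainj, Finset.card_univ, Fintype.card_fin]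
      have hAT' : A ⊆ T' := by
        intro x hx
        obtain ⟨i, _, rfl⟩ := Finset.mem_image.1 hx
        exact haaT' i
      have hAanti : IsAntichain (· ≤ ·) (A : Set P) := by
        intro x hx y hy hne hle
        simp only [hAdef, Finset.coe_image, Set.mem_image, Finset.mem_coe] at hx hy
        obtain ⟨i, _, rfl⟩ := hx
        obtain ⟨j, _, rfl⟩ := hy
        have hij : i ≠ j := fun h => hne (by rw [h])
        obtain ⟨B, hBT, hBa, hBk, hmem⟩ := (Finset.mem_filter.1 (haaS j)).2
        obtain ⟨b, hbinj, hb, hble, hbmem⟩ := htrans B hBT hBa hBk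
        have hbj : b j = aa j := by
          have : aa j ∈ B ∩ C j := Finset.mem_inter.2 ⟨hmem, haaC j⟩
          rw [hb j, Finset.mem_singleton] at this
          exact this.symm
        have hbij : b i ≠ b j := fun h => hij (hbinj h)
        have : b i ≤ b j := by rw [hbj]; exact le_trans (hble i) hle
        exact hBa (hbmem i) (hbmem j) hbij this
      -- some aa i is below a
      have hcomp : ∃ i, aa i ≤ a := by
        by_contra h
        push_neg at h
        have hanA : a ∉ A := fun ha => (Finset.mem_erase.1 (hAT' ha)).1 rfl
        have hinsanti : IsAntichain (· ≤ ·) ((insert a A : Finset P) : Set P) := by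
          intro x hx y hy hne hle
          simp only [Finset.coe_insert, Set.mem_insert_iff, Finset.mem_coe] at hx hy
          rcases hx with rfl | hx
          · rcases hy with rfl | hy
            · exact hne rfl
            · -- x = a ≤ y ∈ A
              have hyT : y ∈ T := hT'sub (hAT' hy)
              exact hne (le_antisymm hle (hamax hyT hle))
          · rcases hy with rfl | hy
            · -- x ∈ A, x ≤ a
              obtain ⟨i, _, rfl⟩ := Finset.mem_image.1 hx
              exact h i hle
            · exact hAanti hx hy hne hle
        have := hw (insert a A) (by
          intro x hx
          rcases Finset.mem_insert.1 hx with rfl | hx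
          · exact haT
          · exact hT'sub (hAT' hx)) hinsanti
        rw [Finset.card_insert_of_notMem hanA, hAcard] at this
        omega
      obtain ⟨i, hia⟩ := hcomp
      -- the chain K
      set K : Finset P := insert a ((C i).filter (fun x => x ≤ aa i)) with hKdef
      have hKchain : IsChain (· ≤ ·) (K : Set P) := by
        intro x hx y hy hne
        simp only [hKdef, Finset.coe_insert, Set.mem_insert_iff, Finset.mem_coe,
          Finset.mem_filter] at hx hy
        rcases hx with rfl | ⟨hxC, hxle⟩
        · rcases hy with rfl | ⟨hyC, hyle⟩
          · exact absurd rfl hne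
          · exact Or.inr (le_trans hyle hia)
        · rcases hy with rfl | ⟨hyC, hyle⟩
          · exact Or.inl (le_trans hxle hia)
          · exact hCchain i hxC hyC hne
      have hKT : K ⊆ T := by
        intro x hx
        rcases Finset.mem_insert.1 hx with rfl | hx
        · exact haT
        · exact hT'sub (hCsub i (Finset.mem_filter.1 hx).1)
      set T'' : Finset P := T \ K with hT''def
      have hT''card : T''.card ≤ n := by
        have hsub : T'' ⊆ T' := by
          intro x hx
          rw [hT''def, Finset.mem_sdiff] at hx
          refine Finset.mem_erase.2 ⟨?_, hx.1⟩
          intro hxa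
          exact hx.2 (by rw [hKdef, hxa]; exact Finset.mem_insert_self _ _)
        exact le_trans (Finset.card_le_card hsub) hT'card
      have hT''w : ∀ A' : Finset P, A' ⊆ T'' → IsAntichain (· ≤ ·) (A' : Set P) →
          A'.card ≤ m := by
        intro A' hA' hanti
        by_contra hgt
        push_neg at hgt
        have hsubT' : A' ⊆ T' := by
          intro x hx
          have := hA' hx
          rw [hT''def, Finset.mem_sdiff] at this
          refine Finset.mem_erase.2 ⟨?_, this.1⟩
          intro hxa
          exact this.2 (by rw [hKdef, hxa]; exact Finset.mem_insert_self _ _)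
        have hle : A'.card ≤ m + 1 := hw' A' hsubT' hanti
        have hcardk : A'.card = m + 1 := by omega
        obtain ⟨b, _, hb, hble, hbmem⟩ := htrans A' hsubT' hanti hcardk
        have hbiK : b i ∈ K := by
          rw [hKdef]
          refine Finset.mem_insert_of_mem (Finset.mem_filter.2 ⟨?_, hble i⟩)
          have : b i ∈ A' ∩ C i := by rw [hb i]; exact Finset.mem_singleton_self _
          exact (Finset.mem_inter.1 this).2
        have : b i ∈ T'' := hA' (hbmem i)
        rw [hT''def, Finset.mem_sdiff] at this
        exact this.2 hbiK
      obtain ⟨D, hDchain, hDsub, hDcov⟩ := ih T'' m hT''card hT''w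
      refine ⟨Fin.cons K D, ?_, ?_, ?_⟩
      · intro j
        induction j using Fin.cases with
        | zero => simpa using hKchain
        | succ j => simpa using hDchain j
      · intro j
        induction j using Fin.cases with
        | zero => simpa using hKT
        | succ j =>
          simp only [Fin.cons_succ]
          exact (hDsub j).trans (fun x hx => (Finset.mem_sdiff.1 hx).1)
      · intro x hx
        by_cases hxK : x ∈ K
        · exact Finset.mem_biUnion.2 ⟨0, Finset.mem_univ _, by simpa using hxK⟩
        · have : x ∈ T'' := Finset.mem_sdiff.2 ⟨hx, hxK⟩
          obtain ⟨j, _, hj⟩ := Finset.mem_biUnion.1 (hDcov this)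
          exact Finset.mem_biUnion.2 ⟨j.succ, Finset.mem_univ _, by simpa using hj⟩
    · -- easy case: all antichains of T' have ≤ m elements
      have hw'' : ∀ A : Finset P, A ⊆ T' → IsAntichain (· ≤ ·) (A : Set P) → A.card ≤ m := by
        intro A hA hanti
        have h1 := hw' A hA hanti
        rcases Nat.lt_or_ge A.card (m + 1) with h | h
        · omega
        · exact absurd ⟨A, hA, hanti, le_antisymm h1 h⟩ hcase
      obtain ⟨D, hDchain, hDsub, hDcov⟩ := ih T' m hT'card hw''
      refine ⟨Fin.cons {a} D, ?_, ?_, ?_⟩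
      · intro j
        induction j using Fin.cases with
        | zero =>
          simp only [Fin.cons_zero]
          intro x hx y hy hne
          simp only [Finset.coe_singleton, Set.mem_singleton_iff] at hx hy
          exact absurd (hx.trans hy.symm) hne
        | succ j => simpa using hDchain j
      · intro j
        induction j using Fin.cases with
        | zero => simpa using haT
        | succ j =>
          simp only [Fin.cons_succ]
          exact (hDsub j).trans hT'sub
      · intro x hx
        by_cases hxa : x = a
        · exact Finset.mem_biUnion.2 ⟨0, Finset.mem_univ _, by simp [hxa]⟩
        · have : x ∈ T' := Finset.mem_erase.2 ⟨hxa, hx⟩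
          obtain ⟨j, _, hj⟩ := Finset.mem_biUnion.1 (hDcov this)
          exact Finset.mem_biUnion.2 ⟨j.succ, Finset.mem_univ _, by simpa using hj⟩

end Dilworth

lemma antichain_card_le {P : Type*} [DecidableEq P] [PartialOrder P] {r : ℕ}
    {C : Fin r → Finset P}
    (hC : ∀ i, IsChain (· ≤ ·) ((C i : Set P))) {B : Finset P}
    (hB : IsAntichain (· ≤ ·) (B : Set P)) (hcov : B ⊆ Finset.univ.biUnion C) :
    B.card ≤ r := by
  have h1 : B ⊆ Finset.univ.biUnion (fun i => B ∩ C i) := by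
    intro x hx
    obtain ⟨i, _, hi⟩ := Finset.mem_biUnion.1 (hcov hx)
    exact Finset.mem_biUnion.2 ⟨i, Finset.mem_univ i, Finset.mem_inter.2 ⟨hx, hi⟩⟩
  calc B.card ≤ (Finset.univ.biUnion (fun i => B ∩ C i)).card := Finset.card_le_card h1
    _ ≤ ∑ i : Fin r, (B ∩ C i).card := Finset.card_biUnion_le
    _ ≤ ∑ _i : Fin r, 1 := Finset.sum_le_sum fun i _ => inter_card_le_one' (hC i) hB
    _ = r := by simp

open MvPolynomial

/-- for a finite poset `P`, the maximum cardinality of an independent set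
of the hypergraph `H_r(P)` (whose edges are the `(r+1)`-element antichains of `P`) equals
the maximum cardinality of a union of `r` chains of `P`. -/
theorem indepNum_antichain_hypergraph_eq_union_chains
    {P : Type*} [Fintype P] [DecidableEq P] [PartialOrder P] (r : ℕ) :
    sSup {k | ∃ T : Finset P,
        (∀ A : Finset P, A ⊆ T → IsAntichain (· ≤ ·) (A : Set P) → A.card ≠ r + 1) ∧
        T.card = k} =
    sSup {k | ∃ C : Fin r → Finset P,
        (∀ i, IsChain (· ≤ ·) ((C i : Set P))) ∧
        (Finset.univ.biUnion C).card = k} := by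
  congr 1
  ext k
  constructor
  · rintro ⟨T, hT, rfl⟩
    have hbound : ∀ A : Finset P, A ⊆ T → IsAntichain (· ≤ ·) (A : Set P) → A.card ≤ r := by
      intro A hA hanti
      by_contra h
      push_neg at h
      obtain ⟨A', hA'sub, hA'card⟩ := Finset.exists_subset_card_eq (Nat.succ_le_of_lt h)
      exact hT A' (hA'sub.trans hA) (hanti.subset (by exact_mod_cast hA'sub)) hA'card
    obtain ⟨C, hCchain, hCsub, hCcov⟩ := dilworth T.card T r le_rfl hbound
    refine ⟨C, hCchain, ?_⟩
    have : Finset.univ.biUnion C = T := by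
      apply Finset.Subset.antisymm
      · intro x hx
        obtain ⟨i, _, hi⟩ := Finset.mem_biUnion.1 hx
        exact hCsub i hi
      · exact hCcov
    rw [this]
  · rintro ⟨C, hCchain, rfl⟩
    refine ⟨Finset.univ.biUnion C, ?_, rfl⟩
    intro A hA hanti hcard
    have := antichain_card_le hCchain hanti hA
    omega
end

section
/- Let I be a homogeneous ideal in K[x_1,...,x_n] and ≺ a term order such that both I and in_≺(I) are radical. Then the initial ideal of the symbolic power is contained in the symbolic power of the initial ideal: in_≺(I^{(r)}) ⊆ (in_≺(I))^{(r)}. -/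
open MvPolynomial

/-- Leading exponent of a polynomial with respect to a monomial order. -/
noncomputable def leadExp {K : Type*} [Field K] {n : ℕ} (m : MonomialOrder (Fin n))
    (f : MvPolynomial (Fin n) K) : Fin n →₀ ℕ :=
  m.toSyn.symm (f.support.sup (fun d => m.toSyn d))

/-- The initial ideal of `I` with respect to a monomial order. -/
noncomputable def initialIdeal {K : Type*} [Field K] {n : ℕ} (m : MonomialOrder (Fin n))
    (I : Ideal (MvPolynomial (Fin n) K)) : Ideal (MvPolynomial (Fin n) K) :=
  Ideal.span {q | ∃ f ∈ I, f ≠ 0 ∧ q = monomial (leadExp m f) (1 : K)}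

namespace SymbAux
open Finset

variable {n : ℕ}

/-- Product of binomial coefficients. -/
def binomF (u a : Fin n →₀ ℕ) : ℕ := ∏ i : Fin n, (u i).choose (a i)

lemma binomF_zero_right (u : Fin n →₀ ℕ) : binomF u 0 = 1 := by simp [binomF]

lemma binomF_eq_zero {u a : Fin n →₀ ℕ} (h : ¬ a ≤ u) : binomF u a = 0 := by
  rw [Finsupp.le_def] at h
  push_neg at h
  obtain ⟨i, hi⟩ := h
  exact Finset.prod_eq_zero (Finset.mem_univ i) (Nat.choose_eq_zero_of_lt hi)

lemma le_of_binomF_ne_zero {u a : Fin n →₀ ℕ} (h : binomF u a ≠ 0) : a ≤ u := by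
  by_contra hc; exact h (binomF_eq_zero hc)

lemma binomF_filter (b : Fin n →₀ ℕ) (p : Fin n → Prop) [DecidablePred p] :
    binomF b (b.filter p) = 1 := by
  unfold binomF
  apply Finset.prod_eq_one
  intro i _
  rw [Finsupp.filter_apply]
  split_ifs
  · exact Nat.choose_self _
  · exact Nat.choose_zero_right _

lemma binomF_zero_at {v w : Fin n →₀ ℕ} {j : Fin n} (h0 : v j = 0) (hw : w j ≠ 0) :
    binomF v w = 0 :=
  Finset.prod_eq_zero (Finset.mem_univ j)
    (by rw [h0]; exact Nat.choose_eq_zero_of_lt (Nat.pos_of_ne_zero hw))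

lemma coeff_prod_one_add_X_pow (u a : Fin n →₀ ℕ) :
    coeff a (∏ i : Fin n, (1 + X i : MvPolynomial (Fin n) ℕ) ^ (u i)) = binomF u a := by
  induction u using Finsupp.induction generalizing a with
  | zero =>
      simp only [Finsupp.coe_zero, Pi.zero_apply, pow_zero, Finset.prod_const_one]
      by_cases ha : a = 0
      · subst ha; simp [binomF, coeff_one]
      · have : ∃ i, a i ≠ 0 := by
          by_contra hc; push_neg at hc
          exact ha (Finsupp.ext hc)
        obtain ⟨i, hi⟩ := this
        rw [coeff_one, if_neg (fun h => ha h.symm)]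
        exact (Finset.prod_eq_zero (Finset.mem_univ i)
          (Nat.choose_eq_zero_of_lt (Nat.pos_of_ne_zero hi))).symm
  | single_add j k v hj hk ih =>
      have hvj : v j = 0 := Finsupp.notMem_support_iff.mp hj
      have hsplit : (∏ i : Fin n, (1 + X i : MvPolynomial (Fin n) ℕ) ^ ((Finsupp.single j k + v) i))
          = (1 + X j) ^ k * ∏ i : Fin n, (1 + X i : MvPolynomial (Fin n) ℕ) ^ (v i) := by
        have h1 : ∀ i : Fin n, (1 + X i : MvPolynomial (Fin n) ℕ) ^ ((Finsupp.single j k + v) i)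
            = (1 + X i) ^ (Finsupp.single j k i) * (1 + X i) ^ (v i) := by
          intro i; rw [Finsupp.add_apply, pow_add]
        rw [Finset.prod_congr rfl (fun i _ => h1 i), Finset.prod_mul_distrib]
        congr 1
        rw [Finset.prod_eq_single j (fun i _ hij => by
          rw [Finsupp.single_apply, if_neg (fun h => hij h.symm), pow_zero])
          (fun h => absurd (Finset.mem_univ j) h)]
        rw [Finsupp.single_apply, if_pos rfl]
      rw [hsplit]
      have hadd : (1 + X j : MvPolynomial (Fin n) ℕ) ^ k
          = ∑ c ∈ Finset.range (k + 1), X j ^ c * 1 ^ (k - c) * (k.choose c : MvPolynomial (Fin n) ℕ) := by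
        rw [add_comm (1 : MvPolynomial (Fin n) ℕ) (X j), add_pow]
      rw [hadd, Finset.sum_mul, coeff_sum]
      have hterm : ∀ c, coeff a (X j ^ c * 1 ^ (k - c) * (k.choose c : MvPolynomial (Fin n) ℕ)
            * ∏ i : Fin n, (1 + X i : MvPolynomial (Fin n) ℕ) ^ (v i))
          = k.choose c * (if Finsupp.single j c ≤ a
              then binomF v (a - Finsupp.single j c) else 0) := by
        intro c
        have : (X j ^ c * 1 ^ (k - c) * (k.choose c : MvPolynomial (Fin n) ℕ)
              * ∏ i : Fin n, (1 + X i : MvPolynomial (Fin n) ℕ) ^ (v i))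
            = (k.choose c) • (monomial (Finsupp.single j c) (1 : ℕ)
              * ∏ i : Fin n, (1 + X i : MvPolynomial (Fin n) ℕ) ^ (v i)) := by
          rw [nsmul_eq_mul, X_pow_eq_monomial]; ring
        rw [this, coeff_smul, coeff_monomial_mul', smul_eq_mul]
        split_ifs with h
        · rw [one_mul, ih]
        · rw [mul_zero]
      rw [Finset.sum_congr rfl (fun c _ => hterm c)]
      by_cases haj : a j ≤ k
      · rw [Finset.sum_eq_single (a j)
          (fun c hc hne => ?_) (fun h => absurd (Finset.mem_range.mpr (by omega)) h)]
        · rw [if_pos (Finsupp.single_le_iff.mpr le_rfl)]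
          -- now show k.choose (a j) * binomF v (a - single j (a j)) = binomF (single j k + v) a
          unfold binomF
          rw [← Finset.mul_prod_erase Finset.univ _ (Finset.mem_univ j),
            ← Finset.mul_prod_erase Finset.univ
              (fun i => ((Finsupp.single j k + v) i).choose (a i)) (Finset.mem_univ j)]
          have e1 : (a - Finsupp.single j (a j)) j = 0 := by
            rw [Finsupp.tsub_apply, Finsupp.single_apply, if_pos rfl, Nat.sub_self]
          rw [e1, hvj, Nat.choose_zero_right, one_mul]
          have e2 : (Finsupp.single j k + v) j = k := by
            rw [Finsupp.add_apply, hvj, Finsupp.single_apply, if_pos rfl, Nat.add_zero]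
          rw [e2]
          congr 1
          · apply Finset.prod_congr rfl
            intro i hi
            have hij : i ≠ j := (Finset.mem_erase.mp hi).1
            have e3 : (a - Finsupp.single j (a j)) i = a i := by
              rw [Finsupp.tsub_apply, Finsupp.single_apply, if_neg (fun h => hij h.symm),
                Nat.sub_zero]
            have e4 : (Finsupp.single j k + v) i = v i := by
              rw [Finsupp.add_apply, Finsupp.single_apply, if_neg (fun h => hij h.symm),
                Nat.zero_add]
            rw [e3, e4]
        · -- c ≠ a j
          split_ifs with h
          · have hc' : c < a j := lt_of_le_of_ne (Finsupp.single_le_iff.mp h) hne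
            rw [binomF_zero_at hvj (j := j) (by
              rw [Finsupp.tsub_apply, Finsupp.single_apply, if_pos rfl]
              omega), mul_zero]
          · rw [mul_zero]
      · -- a j > k : both sides are 0
        rw [Finset.sum_eq_zero, Eq.comm]
        · unfold binomF
          apply Finset.prod_eq_zero (Finset.mem_univ j)
          have e2 : (Finsupp.single j k + v) j = k := by
            rw [Finsupp.add_apply, hvj, Finsupp.single_apply, if_pos rfl, Nat.add_zero]
          rw [e2]
          exact Nat.choose_eq_zero_of_lt (by omega)
        · intro c hc
          rw [Finset.mem_range] at hc
          rw [if_pos (Finsupp.single_le_iff.mpr (by omega))]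
          rw [binomF_zero_at hvj (j := j) (by
            rw [Finsupp.tsub_apply, Finsupp.single_apply, if_pos rfl]
            omega), mul_zero]

lemma binomF_vandermonde (u v a : Fin n →₀ ℕ) :
    ∑ p ∈ Finset.HasAntidiagonal.antidiagonal a, binomF u p.1 * binomF v p.2 = binomF (u + v) a := by
  have key : (∏ i : Fin n, (1 + X i : MvPolynomial (Fin n) ℕ) ^ ((u + v) i))
      = (∏ i : Fin n, (1 + X i : MvPolynomial (Fin n) ℕ) ^ (u i))
        * ∏ i : Fin n, (1 + X i : MvPolynomial (Fin n) ℕ) ^ (v i) := by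
    rw [← Finset.prod_mul_distrib]
    exact Finset.prod_congr rfl fun i _ => by rw [Finsupp.add_apply, pow_add]
  have := coeff_prod_one_add_X_pow (u + v) a
  rw [key, coeff_mul] at this
  rw [← this]
  exact Finset.sum_congr rfl fun p _ => by
    rw [coeff_prod_one_add_X_pow, coeff_prod_one_add_X_pow]

variable {K : Type*} [Field K]

/-- Hasse (divided-power) derivative of multi-index `a`. -/
noncomputable def hD (a : Fin n →₀ ℕ) (f : MvPolynomial (Fin n) K) : MvPolynomial (Fin n) K :=
  (AddMonoidAlgebra.coeff f).sum fun u c => monomial (u - a) ((binomF u a : K) * c)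

lemma hD_monomial (a u : Fin n →₀ ℕ) (c : K) :
    hD a (monomial u c) = monomial (u - a) ((binomF u a : K) * c) := by
  unfold hD
  rw [← single_eq_monomial]
  exact Finsupp.sum_single_index (by rw [mul_zero, monomial_zero])

lemma hD_add (a : Fin n →₀ ℕ) (f g : MvPolynomial (Fin n) K) :
    hD a (f + g) = hD a f + hD a g := by
  unfold hD
  apply Finsupp.sum_add_index'
  · intro u; rw [mul_zero, monomial_zero]
  · intro u c d; rw [mul_add, map_add]

lemma hD_zero_idx (f : MvPolynomial (Fin n) K) : hD 0 f = f := by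
  unfold hD
  conv_rhs => rw [← AddMonoidAlgebra.sum_coeff_single f]
  apply Finsupp.sum_congr
  intro u _
  rw [binomF_zero_right, tsub_zero, Nat.cast_one, one_mul, single_eq_monomial]

lemma hD_zero (a : Fin n →₀ ℕ) : hD a (0 : MvPolynomial (Fin n) K) = 0 := by
  unfold hD; exact Finsupp.sum_zero_index

lemma hD_mul (a : Fin n →₀ ℕ) (f g : MvPolynomial (Fin n) K) :
    hD a (f * g) = ∑ p ∈ Finset.HasAntidiagonal.antidiagonal a, hD p.1 f * hD p.2 g := by
  induction f using MvPolynomial.induction_on' generalizing g with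
  | add f₁ f₂ ih₁ ih₂ =>
      rw [add_mul, hD_add, ih₁, ih₂, ← Finset.sum_add_distrib]
      exact Finset.sum_congr rfl fun p _ => by rw [hD_add, add_mul]
  | monomial u c =>
      induction g using MvPolynomial.induction_on' with
      | add g₁ g₂ ih₁ ih₂ =>
          rw [mul_add, hD_add, ih₁, ih₂, ← Finset.sum_add_distrib]
          exact Finset.sum_congr rfl fun p _ => by rw [hD_add, mul_add]
      | monomial v d =>
          rw [monomial_mul, hD_monomial]
          have step : ∀ p ∈ Finset.HasAntidiagonal.antidiagonal a,
              hD p.1 (monomial u c) * hD p.2 (monomial v d)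
              = monomial (u + v - a) (((binomF u p.1 * binomF v p.2 : ℕ) : K) * (c * d)) := by
            intro p hp
            have hpa : p.1 + p.2 = a := Finset.HasAntidiagonal.mem_antidiagonal.mp hp
            rw [hD_monomial, hD_monomial, monomial_mul]
            by_cases h1 : p.1 ≤ u
            · by_cases h2 : p.2 ≤ v
              · have : u - p.1 + (v - p.2) = u + v - a := by
                  rw [tsub_add_tsub_comm h1 h2, hpa]
                rw [this]
                congr 1
                push_cast
                ring
              · rw [binomF_eq_zero h2]
                push_cast
                rw [mul_zero, zero_mul, mul_zero, zero_mul, monomial_zero, monomial_zero]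
            · rw [binomF_eq_zero h1]
              push_cast
              rw [zero_mul, zero_mul, zero_mul, zero_mul, monomial_zero, monomial_zero]
          rw [Finset.sum_congr rfl step, ← map_sum, ← Finset.sum_mul, ← Nat.cast_sum,
            binomF_vandermonde]

lemma hD_def (a : Fin n →₀ ℕ) (f : MvPolynomial (Fin n) K) :
    hD a f = ∑ v ∈ f.support, monomial (v - a) ((binomF v a : K) * coeff v f) := sum_def

lemma coeff_hD_sub {a b : Fin n →₀ ℕ} (hab : a ≤ b) (f : MvPolynomial (Fin n) K) :
    coeff (b - a) (hD a f) = (binomF b a : K) * coeff b f := by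
  rw [hD_def, coeff_sum]
  have hterm : ∀ v ∈ f.support, v ≠ b →
      coeff (b - a) (monomial (v - a) ((binomF v a : K) * coeff v f)) = 0 := by
    intro v _ hvb
    rw [coeff_monomial]
    split_ifs with h
    · by_cases hav : a ≤ v
      · exact absurd (by rw [← tsub_add_cancel_of_le hav, h, tsub_add_cancel_of_le hab]) hvb
      · rw [binomF_eq_zero hav, Nat.cast_zero, zero_mul]
    · rfl
  rw [Finset.sum_eq_single b hterm]
  · rw [coeff_monomial, if_pos rfl]
  · intro hb
    have hfb : coeff b f = 0 := MvPolynomial.notMem_support_iff.mp hb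
    rw [hfb, mul_zero, monomial_zero, coeff_zero]

lemma coeff_hD_ne_zero {a w : Fin n →₀ ℕ} {f : MvPolynomial (Fin n) K}
    (h : coeff w (hD a f) ≠ 0) : ∃ v ∈ f.support, a ≤ v ∧ w = v - a := by
  rw [hD_def, coeff_sum] at h
  obtain ⟨v, hv, hv2⟩ := Finset.exists_ne_zero_of_sum_ne_zero h
  rw [coeff_monomial] at hv2
  split_ifs at hv2 with h'
  · refine ⟨v, hv, ?_, h'.symm⟩
    apply le_of_binomF_ne_zero (u := v) (a := a)
    intro hz
    rw [hz] at hv2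
    simp at hv2
  · exact absurd rfl hv2


section LeadExp

variable {K : Type*} [Field K] (m : MonomialOrder (Fin n))

lemma toSyn_leadExp (f : MvPolynomial (Fin n) K) :
    m.toSyn (leadExp m f) = f.support.sup (fun d => m.toSyn d) := by
  unfold leadExp; rw [AddEquiv.apply_symm_apply]

lemma leadExp_mem {f : MvPolynomial (Fin n) K} (hf : f ≠ 0) : leadExp m f ∈ f.support := by
  obtain ⟨b, hb, hsup⟩ := Finset.exists_mem_eq_sup f.support
    (MvPolynomial.support_nonempty.mpr hf) (fun d => m.toSyn d)
  unfold leadExp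
  rw [hsup, AddEquiv.symm_apply_apply]
  exact hb

lemma le_leadExp {f : MvPolynomial (Fin n) K} {d : Fin n →₀ ℕ} (hd : d ∈ f.support) :
    m.toSyn d ≤ m.toSyn (leadExp m f) := by
  rw [toSyn_leadExp]; exact Finset.le_sup hd

lemma leadExp_eq_of {f : MvPolynomial (Fin n) K} {b : Fin n →₀ ℕ} (hb : b ∈ f.support)
    (hmax : ∀ d ∈ f.support, m.toSyn d ≤ m.toSyn b) : leadExp m f = b := by
  unfold leadExp
  have : f.support.sup (fun d => m.toSyn d) = m.toSyn b :=
    le_antisymm (Finset.sup_le hmax) (Finset.le_sup hb)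
  rw [this, AddEquiv.symm_apply_apply]

lemma coeff_leadExp_ne_zero {f : MvPolynomial (Fin n) K} (hf : f ≠ 0) :
    coeff (leadExp m f) f ≠ 0 :=
  MvPolynomial.mem_support_iff.mp (leadExp_mem m hf)

lemma leadExp_one : leadExp m (1 : MvPolynomial (Fin n) K) = 0 := by
  apply leadExp_eq_of
  · rw [MvPolynomial.mem_support_iff, coeff_one, if_pos rfl]
    exact one_ne_zero
  · intro d hd
    have hd0 : d = 0 := by
      by_contra h
      exact (MvPolynomial.mem_support_iff.mp hd)
        (by rw [coeff_one, if_neg (fun hh => h hh.symm)])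
    rw [hd0]

lemma hD_leadExp {f : MvPolynomial (Fin n) K} (hf : f ≠ 0) {a : Fin n →₀ ℕ}
    (ha : a ≤ leadExp m f) (h1 : binomF (leadExp m f) a = 1) :
    hD a f ≠ 0 ∧ leadExp m (hD a f) = leadExp m f - a := by
  have hcoeff : coeff (leadExp m f - a) (hD a f) = coeff (leadExp m f) f := by
    rw [coeff_hD_sub ha, h1, Nat.cast_one, one_mul]
  have hne : hD a f ≠ 0 := by
    intro h0
    rw [h0, coeff_zero] at hcoeff
    exact coeff_leadExp_ne_zero m hf hcoeff.symm
  refine ⟨hne, leadExp_eq_of m ?_ ?_⟩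
  · rw [MvPolynomial.mem_support_iff, hcoeff]
    exact coeff_leadExp_ne_zero m hf
  · intro d hd
    obtain ⟨v, hv, hav, rfl⟩ := coeff_hD_ne_zero (MvPolynomial.mem_support_iff.mp hd)
    have h2 : m.toSyn (v - a) + m.toSyn a ≤ m.toSyn (leadExp m f - a) + m.toSyn a := by
      rw [← map_add, ← map_add, tsub_add_cancel_of_le hav, tsub_add_cancel_of_le ha]
      exact le_leadExp m hv
    exact le_of_add_le_add_right h2

end LeadExp

section Deg

/-- Total degree of a multi-index. -/
def deg (a : Fin n →₀ ℕ) : ℕ := ∑ i, a i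

lemma deg_add {a b c : Fin n →₀ ℕ} (h : a + b = c) : deg a + deg b = deg c := by
  rw [← h]
  unfold deg
  rw [← Finset.sum_add_distrib]
  exact Finset.sum_congr rfl fun i _ => (Finsupp.add_apply a b i).symm

lemma deg_eq_zero {a : Fin n →₀ ℕ} (h : deg a = 0) : a = 0 := by
  unfold deg at h
  rw [Finset.sum_eq_zero_iff] at h
  exact Finsupp.ext fun i => h i (Finset.mem_univ i)

lemma one_le_deg {a : Fin n →₀ ℕ} (h : a ≠ 0) : 1 ≤ deg a := by
  by_contra hc
  push_neg at hc
  exact h (deg_eq_zero (by omega))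

lemma exists_le_deg {w : Fin n →₀ ℕ} {r : ℕ} (h : r ≤ deg w) :
    ∃ c : Fin n →₀ ℕ, c ≤ w ∧ deg c = r := by
  induction r with
  | zero => exact ⟨0, zero_le, by simp [deg]⟩
  | succ r ih =>
      obtain ⟨c, hcw, hcd⟩ := ih (by omega)
      have hlt : ∃ i, c i < w i := by
        by_contra hc
        push_neg at hc
        have : deg w ≤ deg c := Finset.sum_le_sum fun i _ => hc i
        omega
      obtain ⟨i, hi⟩ := hlt
      refine ⟨c + Finsupp.single i 1, ?_, ?_⟩
      · rw [Finsupp.le_def]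
        intro j
        rw [Finsupp.add_apply, Finsupp.single_apply]
        split_ifs with hj
        · subst hj; omega
        · rw [Nat.add_zero]; exact hcw j
      · rw [← deg_add rfl, hcd]
        congr 1
        unfold deg
        rw [Finset.sum_eq_single i (fun j _ hji => by
            rw [Finsupp.single_apply, if_neg (fun hh => hji hh.symm)])
          (fun hi => absurd (Finset.mem_univ i) hi),
          Finsupp.single_apply, if_pos rfl]

end Deg

section HDIdeal

variable {K : Type*} [Field K]

lemma hD_mem_pow {J : Ideal (MvPolynomial (Fin n) K)} :
    ∀ r : ℕ, ∀ g ∈ J ^ r, ∀ a : Fin n →₀ ℕ, deg a < r → hD a g ∈ J := by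
  intro r
  induction r with
  | zero => intro g hg a ha; omega
  | succ r ih =>
      intro g hg
      rw [pow_succ] at hg
      refine Submodule.mul_induction_on hg ?_ ?_
      · intro u hu v hv a ha
        rw [hD_mul]
        apply Ideal.sum_mem
        intro p hp
        by_cases hbp : deg p.1 < r
        · exact Ideal.mul_mem_right _ _ (ih u hu p.1 hbp)
        · have hadd : deg p.1 + deg p.2 = deg a := deg_add (Finset.HasAntidiagonal.mem_antidiagonal.mp hp)
          have hp2 : p.2 = 0 := by
            by_contra h2
            have := one_le_deg h2
            omega
          rw [hp2, hD_zero_idx]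
          exact Ideal.mul_mem_left _ _ hv
      · intro x y hx hy a ha
        rw [hD_add]
        exact Ideal.add_mem _ (hx a ha) (hy a ha)

end HDIdeal

section IdealLemmas

variable {R : Type*} [CommRing R]

lemma mem_symbolicPower_of {J : Ideal R} {r : ℕ} {s x : R}
    (hs : s ∈ symbCompl J) (h : s * x ∈ J ^ r) : x ∈ symbolicPower J r := by
  rw [symbolicPower, Ideal.mem_comap]
  have hu : IsUnit (algebraMap R (Localization (symbCompl J)) s) :=
    IsLocalization.map_units _ (⟨s, hs⟩ : symbCompl J)
  have hmem : algebraMap R (Localization (symbCompl J)) (s * x)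
      ∈ Ideal.map (algebraMap R (Localization (symbCompl J))) (J ^ r) :=
    Ideal.mem_map_of_mem _ h
  rw [map_mul] at hmem
  have h2 := Ideal.mul_mem_left _ (↑hu.unit⁻¹) hmem
  have hinv : (↑hu.unit⁻¹ : Localization (symbCompl J))
      * algebraMap R (Localization (symbCompl J)) s = 1 := by
    exact hu.val_inv_mul
  rwa [← mul_assoc, hinv, one_mul] at h2

lemma exists_of_mem_symbolicPower {J : Ideal R} {r : ℕ} {x : R}
    (hx : x ∈ symbolicPower J r) : ∃ s ∈ symbCompl J, s * x ∈ J ^ r := by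
  rw [symbolicPower, Ideal.mem_comap,
    IsLocalization.mem_map_algebraMap_iff (symbCompl J)] at hx
  obtain ⟨⟨⟨y, hy⟩, s⟩, hx⟩ := hx
  rw [← map_mul] at hx
  obtain ⟨c, hc⟩ := (IsLocalization.eq_iff_exists (symbCompl J) _).mp hx
  refine ⟨↑c * ↑s, Submonoid.mul_mem _ c.2 s.2, ?_⟩
  have h2 : ↑c * ↑s * x = (c : R) * (x * ↑s) := by ring
  rw [h2, hc]
  exact Ideal.mul_mem_left _ _ hy

lemma mem_of_mul_mem_radical {J : Ideal R} (hJ : J.IsRadical) {t y : R}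
    (ht : t ∈ symbCompl J) (h : t * y ∈ J) : y ∈ J := by
  have hy : y ∈ sInf J.minimalPrimes := by
    rw [Ideal.mem_sInf]
    intro p hp
    exact ((hp.1.1.mem_or_mem (hp.1.2 h)).resolve_left (ht p hp))
  rwa [Ideal.sInf_minimalPrimes, hJ.radical] at hy

lemma hD_symbolic {K : Type*} [Field K] {I : Ideal (MvPolynomial (Fin n) K)} {r : ℕ}
    (hrad : I.IsRadical) {f : MvPolynomial (Fin n) K} (hf : f ∈ symbolicPower I r) :
    ∀ a : Fin n →₀ ℕ, deg a < r → hD a f ∈ I := by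
  obtain ⟨t, ht, htf⟩ := exists_of_mem_symbolicPower hf
  suffices H : ∀ k : ℕ, ∀ a : Fin n →₀ ℕ, deg a = k → deg a < r → hD a f ∈ I by
    exact fun a ha => H (deg a) a rfl ha
  intro k
  induction k using Nat.strong_induction_on with
  | _ k ihk =>
      intro a hdeg hk
      have h1 : hD a (t * f) ∈ I := hD_mem_pow r _ htf a (by omega)
      have hmem0 : ((0 : Fin n →₀ ℕ), a) ∈ Finset.HasAntidiagonal.antidiagonal a :=
        Finset.HasAntidiagonal.mem_antidiagonal.mpr (zero_add a)
      have expand : hD a (t * f) = t * hD a f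
          + ∑ p ∈ (Finset.HasAntidiagonal.antidiagonal a).erase (0, a), hD p.1 t * hD p.2 f := by
        rw [hD_mul, ← Finset.add_sum_erase _ _ hmem0, hD_zero_idx]
      have h2 : ∑ p ∈ (Finset.HasAntidiagonal.antidiagonal a).erase (0, a), hD p.1 t * hD p.2 f ∈ I := by
        apply Ideal.sum_mem
        intro p hp
        have hpadd : p.1 + p.2 = a :=
          Finset.HasAntidiagonal.mem_antidiagonal.mp (Finset.mem_of_mem_erase hp)
        have hpne : p ≠ (0, a) := Finset.ne_of_mem_erase hp
        have hp1 : p.1 ≠ 0 := by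
          intro h0
          apply hpne
          have : p.2 = a := by rw [← hpadd, h0, zero_add]
          exact Prod.ext h0 this
        have hdlt : deg p.2 < k := by
          have := deg_add hpadd
          have := one_le_deg hp1
          omega
        exact Ideal.mul_mem_left _ _ (ihk (deg p.2) (by omega) p.2 rfl (by omega))
      have h3 : t * hD a f ∈ I := by
        have hsub := I.sub_mem h1 h2
        rwa [expand, add_sub_cancel_right] at hsub
      exact mem_of_mul_mem_radical hrad ht h3

end IdealLemmas

section Saturation

variable {R : Type*} [CommRing R]

lemma exists_mul_mem_of_mem_minimalPrime {J p : Ideal R} (hJ : J.IsRadical)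
    (hp : p ∈ J.minimalPrimes) {y : R} (hy : y ∈ p) : ∃ s, s ∉ p ∧ s * y ∈ J := by
  by_contra hcon
  push_neg at hcon
  have hprime : p.IsPrime := hp.1.1
  have h1p : (1 : R) ∉ p := fun h => hprime.ne_top ((Ideal.eq_top_iff_one p).mpr h)
  let M : Submonoid R :=
    { carrier := {x | ∃ s, s ∉ p ∧ ∃ k : ℕ, x = s * y ^ k}
      one_mem' := ⟨1, h1p, 0, by ring⟩
      mul_mem' := by
        rintro x1 x2 ⟨s1, hs1, k1, rfl⟩ ⟨s2, hs2, k2, rfl⟩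
        refine ⟨s1 * s2, fun h => ?_, k1 + k2, by ring⟩
        rcases hprime.mem_or_mem h with h | h
        exacts [hs1 h, hs2 h] }
  have hdisj : Disjoint (J : Set R) (M : Set R) := by
    rw [Set.disjoint_left]
    rintro x hxJ ⟨s, hs, k, rfl⟩
    have hsy : s * y ∈ J := by
      cases k with
      | zero =>
          have hsJ : s ∈ J := by rwa [pow_zero, mul_one] at hxJ
          exact Ideal.mul_mem_right y J hsJ
      | succ k' =>
          apply hJ
          refine ⟨k' + 1, ?_⟩
          have hexp : (s * y) ^ (k' + 1) = s ^ k' * (s * y ^ (k' + 1)) := by ring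
          rw [hexp]
          exact Ideal.mul_mem_left _ _ hxJ
    exact hcon s hs hsy
  obtain ⟨q, hq_prime, hJq, hq_disj⟩ := Ideal.exists_le_prime_disjoint J M hdisj
  have hqp : q ≤ p := by
    intro x hxq
    by_contra hxp
    exact Set.disjoint_left.mp hq_disj hxq ⟨x, hxp, 0, by ring⟩
  have hpq : p ≤ q := hp.2 ⟨hq_prime, hJq⟩ hqp
  exact Set.disjoint_left.mp hq_disj (hpq hy) ⟨1, h1p, 1, by ring⟩

end Saturation

section PerPrime

variable {K : Type*} [Field K]

lemma minimalPrimes_finite (J : Ideal (MvPolynomial (Fin n) K)) :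
    J.minimalPrimes.Finite := by
  rw [Ideal.minimalPrimes_eq_comap]
  exact Set.Finite.image _ (minimalPrimes.finite_of_isNoetherianRing _)

lemma prod_pow_mem {R : Type*} [CommRing R] {J : Ideal R} {g : Fin n → R} {c : Fin n →₀ ℕ}
    (hg : ∀ i, c i ≠ 0 → g i ∈ J) : (∏ i, g i ^ c i) ∈ J ^ (deg c) := by
  unfold deg
  have H : ∀ s : Finset (Fin n), (∏ i ∈ s, g i ^ c i) ∈ J ^ (∑ i ∈ s, c i) := by
    intro s
    induction s using Finset.induction_on with
    | empty =>
        rw [Finset.prod_empty, Finset.sum_empty, pow_zero, Ideal.one_eq_top]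
        exact Submodule.mem_top
    | @insert a s hnotmem ih =>
        rw [Finset.prod_insert hnotmem, Finset.sum_insert hnotmem, pow_add]
        refine Ideal.mul_mem_mul ?_ ih
        by_cases hca : c a = 0
        · rw [hca, pow_zero, pow_zero, Ideal.one_eq_top]
          exact Submodule.mem_top
        · exact Ideal.pow_mem_pow (hg a hca) _
  exact H Finset.univ

lemma exists_avoid_mul_monomial_mem {J p : Ideal (MvPolynomial (Fin n) K)}
    (hJ : J.IsRadical) (hp : p ∈ J.minimalPrimes) {b : Fin n →₀ ℕ} {r : ℕ}
    (hdeg : ∃ c : Fin n →₀ ℕ, c ≤ b ∧ deg c = r ∧ ∀ i, c i ≠ 0 → X i ∈ p) :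
    ∃ s, s ∉ p ∧ s * monomial b (1 : K) ∈ J ^ r := by
  obtain ⟨c, hcb, hcd, hcp⟩ := hdeg
  have hprime := hp.1.1
  have h1p : (1 : MvPolynomial (Fin n) K) ∉ p :=
    fun h => hprime.ne_top ((Ideal.eq_top_iff_one p).mpr h)
  have hchoice : ∀ i : Fin n, ∃ s, s ∉ p ∧ (c i ≠ 0 → s * X i ∈ J) := by
    intro i
    by_cases hci : c i = 0
    · exact ⟨1, h1p, fun h => (h hci).elim⟩
    · obtain ⟨s, hs1, hs2⟩ := exists_mul_mem_of_mem_minimalPrime hJ hp (hcp i hci)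
      exact ⟨s, hs1, fun _ => hs2⟩
  choose s hs1 hs2 using hchoice
  refine ⟨∏ i, s i ^ c i, ?_, ?_⟩
  · intro hmem
    obtain ⟨i, -, hi⟩ := (Ideal.IsPrime.prod_mem_iff (hp := hprime)).mp hmem
    by_cases hci : c i = 0
    · rw [hci, pow_zero] at hi
      exact h1p hi
    · exact hs1 i ((hprime.pow_mem_iff_mem _ (Nat.pos_of_ne_zero hci)).mp hi)
  · have hXc : (∏ i, (X i : MvPolynomial (Fin n) K) ^ c i) = monomial c 1 := by
      rw [← prod_X_pow_eq_monomial]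
      exact (Finset.prod_subset (Finset.subset_univ _) (fun i _ hi => by
        rw [Finsupp.notMem_support_iff.mp hi, pow_zero])).symm
    have hmono : monomial c (1 : K) * monomial (b - c) 1 = monomial b 1 := by
      rw [monomial_mul, one_mul, add_tsub_cancel_of_le hcb]
    have hfactor : (∏ i, s i ^ c i) * monomial b (1 : K)
        = (∏ i, (s i * X i) ^ c i) * monomial (b - c) 1 := by
      calc (∏ i, s i ^ c i) * monomial b (1 : K)
          = (∏ i, s i ^ c i) * ((∏ i, (X i : MvPolynomial (Fin n) K) ^ c i)
            * monomial (b - c) 1) := by rw [hXc, hmono]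
        _ = ((∏ i, s i ^ c i) * (∏ i, (X i : MvPolynomial (Fin n) K) ^ c i))
            * monomial (b - c) 1 := by rw [mul_assoc]
        _ = (∏ i, (s i * X i) ^ c i) * monomial (b - c) 1 := by
            rw [← Finset.prod_mul_distrib]
            congr 1
            exact Finset.prod_congr rfl fun i _ => (mul_pow _ _ _).symm
    rw [hfactor]
    apply Ideal.mul_mem_right
    have hprod := prod_pow_mem (J := J) (g := fun i => s i * X i) (c := c)
      (fun i hic => hs2 i hic)
    rwa [hcd] at hprod

lemma mem_symbolicPower_of_forall {J : Ideal (MvPolynomial (Fin n) K)}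
    {r : ℕ} {x : MvPolynomial (Fin n) K}
    (h : ∀ p ∈ J.minimalPrimes, ∃ s, s ∉ p ∧ s * x ∈ J ^ r) : x ∈ symbolicPower J r := by
  classical
  have hfin : J.minimalPrimes.Finite := minimalPrimes_finite J
  set F : Finset (Ideal (MvPolynomial (Fin n) K)) := hfin.toFinset with hF
  have hFmem : ∀ p, p ∈ F ↔ p ∈ J.minimalPrimes := fun p => hfin.mem_toFinset
  choose! s hs1 hs2 using h
  have he : ∀ p ∈ J.minimalPrimes, ∃ e, e ∈ (F.erase p).inf id ∧ e ∉ p := by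
    intro p hp
    have hple : ¬ ((F.erase p).inf id ≤ p) := by
      intro hle
      obtain ⟨q, hqmem, hqle⟩ := (Ideal.IsPrime.inf_le' hp.1.1).mp hle
      have hq := (hFmem q).mp (Finset.mem_of_mem_erase hqmem)
      have hpq : p ≤ q := hp.2 ⟨hq.1.1, hq.1.2⟩ hqle
      exact (Finset.ne_of_mem_erase hqmem) (le_antisymm hqle hpq)
    obtain ⟨e, he1, he2⟩ := SetLike.not_le_iff_exists.mp hple
    exact ⟨e, he1, he2⟩
  choose! e he1 he2 using he
  refine mem_symbolicPower_of (s := ∑ p ∈ F, e p * s p) ?_ ?_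
  · show ∀ p0 ∈ J.minimalPrimes, (∑ p ∈ F, e p * s p) ∉ p0
    intro p0 hp0 hmem
    have hp0F : p0 ∈ F := (hFmem p0).mpr hp0
    rw [← Finset.add_sum_erase _ _ hp0F] at hmem
    have hrest : ∑ q ∈ F.erase p0, e q * s q ∈ p0 := by
      apply Ideal.sum_mem
      intro q hq
      apply Ideal.mul_mem_right
      have hq' := (hFmem q).mp (Finset.mem_of_mem_erase hq)
      have hp0mem : p0 ∈ F.erase q :=
        Finset.mem_erase.mpr ⟨fun hh => (Finset.ne_of_mem_erase hq) hh.symm, hp0F⟩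
      exact (Finset.inf_le hp0mem : (F.erase q).inf id ≤ p0) (he1 q hq')
    have hhead : e p0 * s p0 ∈ p0 := by
      have hsub := Ideal.sub_mem p0 hmem hrest
      rwa [add_sub_cancel_right] at hsub
    rcases hp0.1.1.mem_or_mem hhead with hcase | hcase
    · exact he2 p0 hp0 hcase
    · exact hs1 p0 hp0 hcase
  · rw [Finset.sum_mul]
    apply Ideal.sum_mem
    intro p hpF
    have hp := (hFmem p).mp hpF
    rw [mul_assoc]
    exact Ideal.mul_mem_left _ _ (hs2 p hp)

end PerPrime

end SymbAux

/-- if `I` and its initial ideal are radical, then the initial ideal of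
the symbolic power is contained in the symbolic power of the initial ideal. -/
theorem initial_symbolicPower_le {K : Type*} [Field K] [IsAlgClosed K] {n : ℕ}
    (I : Ideal (MvPolynomial (Fin n) K)) (hhom : IsHomogeneousIdeal I)
    (m : MonomialOrder (Fin n)) (hIrad : I.IsRadical)
    (hinrad : (initialIdeal m I).IsRadical) (r : ℕ) :
    initialIdeal m (symbolicPower I r) ≤ symbolicPower (initialIdeal m I) r := by
  classical
  rw [show initialIdeal m (symbolicPower I r) = Ideal.span {q | ∃ f ∈ symbolicPower I r,
    f ≠ 0 ∧ q = monomial (leadExp m f) (1 : K)} from rfl, Ideal.span_le]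
  rintro q ⟨f, hf, hf0, rfl⟩
  show monomial (leadExp m f) (1 : K) ∈ symbolicPower (initialIdeal m I) r
  apply SymbAux.mem_symbolicPower_of_forall
  intro p hp
  set b := leadExp m f with hb
  have h1p : (1 : MvPolynomial (Fin n) K) ∉ p :=
    fun h => hp.1.1.ne_top ((Ideal.eq_top_iff_one p).mpr h)
  have hfilter_le : b.filter (fun i => X i ∈ p) ≤ b := by
    rw [Finsupp.le_def]
    intro i
    rw [Finsupp.filter_apply]
    split_ifs
    · exact le_rfl
    · exact Nat.zero_le _
  have hkey : r ≤ SymbAux.deg (b.filter (fun i => X i ∈ p)) := by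
    by_contra hc
    push_neg at hc
    set a := b.filter (fun i => X i ∈ p) with ha
    have hbinom : SymbAux.binomF b a = 1 := SymbAux.binomF_filter b _
    have hDf : SymbAux.hD a f ∈ I := SymbAux.hD_symbolic hIrad hf a hc
    obtain ⟨hne, hlead⟩ := SymbAux.hD_leadExp m hf0 hfilter_le hbinom
    have hgen : monomial (b - a) (1 : K) ∈ initialIdeal m I :=
      Ideal.subset_span ⟨SymbAux.hD a f, hDf, hne, by rw [hlead]⟩
    have hmemp : monomial (b - a) (1 : K) ∈ p := hp.1.2 hgen
    have hmonoprod : (∏ i, (X i : MvPolynomial (Fin n) K) ^ ((b - a) i))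
        = monomial (b - a) 1 := by
      rw [← prod_X_pow_eq_monomial]
      exact (Finset.prod_subset (Finset.subset_univ _) (fun i _ hi => by
        rw [Finsupp.notMem_support_iff.mp hi, pow_zero])).symm
    have hprod : (∏ i, (X i : MvPolynomial (Fin n) K) ^ ((b - a) i)) ∈ p := by
      rw [hmonoprod]; exact hmemp
    obtain ⟨i, -, hi⟩ := (Ideal.IsPrime.prod_mem_iff (hp := hp.1.1)).mp hprod
    by_cases hzero : (b - a) i = 0
    · rw [hzero, pow_zero] at hi
      exact h1p hi
    · have hXip : X i ∈ p := (hp.1.1.pow_mem_iff_mem _ (Nat.pos_of_ne_zero hzero)).mp hi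
      apply hzero
      rw [Finsupp.tsub_apply, ha, Finsupp.filter_apply, if_pos hXip, Nat.sub_self]
  obtain ⟨c, hcw, hcd⟩ := SymbAux.exists_le_deg hkey
  apply SymbAux.exists_avoid_mul_monomial_mem hinrad hp
  refine ⟨c, le_trans hcw hfilter_le, hcd, ?_⟩
  intro i hci
  by_contra hXip
  have hle := (Finsupp.le_def.mp hcw) i
  rw [Finsupp.filter_apply, if_neg hXip] at hle
  exact hci (Nat.le_zero.mp hle)
end
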